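/- arXiv:0903.4966 — 8 statements merged into one kernel-verified Lean document; each statement's English description precedes it below -/
import Mathlib

section
/- Let k be a field and let φ : k[x,y] → k[t] × k[t] be the k-algebra homomorphism determined by φ(x) = (t, t) and φ(y) = (0, t^2). Then the kernel of φ is the principal ideal of k[x,y] generated by y^2 − x^2·y = y·(y − x^2). -/
open Polynomial

/-- `k[x₀,x₁] ≅ k[t]` for one variable. -/
noncomputable def tacE1 (k : Type*) [CommSemiring k] :
    MvPolynomial (Fin 1) k ≃ₐ[k] Polynomial k :=
  (MvPolynomial.finSuccEquiv k 0).trans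
    (Polynomial.mapAlgEquiv (MvPolynomial.isEmptyAlgEquiv k (Fin 0)))

/-- `k[x₀,x₁] ≅ (k[t])[y]` with `x₁` the outer variable. -/
noncomputable def tacE (k : Type*) [CommSemiring k] :
    MvPolynomial (Fin 2) k ≃ₐ[k] Polynomial (Polynomial k) :=
  (MvPolynomial.renameEquiv k (Equiv.swap (0 : Fin 2) 1)).trans
    ((MvPolynomial.finSuccEquiv k 1).trans (Polynomial.mapAlgEquiv (tacE1 k)))

theorem tacE_X1 (k : Type*) [CommSemiring k] : tacE k (MvPolynomial.X 1) = Polynomial.X := by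
  simp [tacE, tacE1, MvPolynomial.finSuccEquiv_X_zero]

theorem tacE_X0 (k : Type*) [CommSemiring k] :
    tacE k (MvPolynomial.X 0) = Polynomial.C Polynomial.X := by
  have h1 : (MvPolynomial.finSuccEquiv k 1) (MvPolynomial.X 1)
      = Polynomial.C (MvPolynomial.X 0) := by
    rw [show (1 : Fin 2) = Fin.succ 0 from rfl]
    exact MvPolynomial.finSuccEquiv_X_succ
  simp [tacE, tacE1, h1, MvPolynomial.finSuccEquiv_X_zero]

/-- The second-stage map `(k[t])[y] → k[t] × k[t]`, `y ↦ (0, t²)`. -/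
noncomputable def tacPhi (k : Type*) [CommSemiring k] :
    Polynomial (Polynomial k) →+* Polynomial k × Polynomial k :=
  RingHom.prod (Polynomial.evalRingHom 0) (Polynomial.evalRingHom (Polynomial.X ^ 2))

theorem tacKerPhi (k : Type*) [Field k] :
    RingHom.ker (tacPhi k) =
      Ideal.span {Polynomial.X ^ 2 - (Polynomial.C (Polynomial.X)) ^ 2 * Polynomial.X} := by
  have hC : (Polynomial.C (Polynomial.X : Polynomial k)) ^ 2
      = Polynomial.C ((Polynomial.X : Polynomial k) ^ 2) := by rw [map_pow]
  ext p
  rw [RingHom.mem_ker, Ideal.mem_span_singleton, Prod.ext_iff]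
  simp only [tacPhi, RingHom.prod_apply, coe_evalRingHom, Prod.fst_zero, Prod.snd_zero]
  constructor
  · rintro ⟨h0, h2⟩
    have hx : (Polynomial.X : Polynomial (Polynomial k)) ∣ p := by
      simpa using (Polynomial.dvd_iff_isRoot (p := p) (a := 0)).2 h0
    obtain ⟨q, rfl⟩ := hx
    have hq : Polynomial.eval ((Polynomial.X : Polynomial k) ^ 2) q = 0 := by
      simp only [Polynomial.eval_mul, Polynomial.eval_X] at h2
      have hX2 : ((Polynomial.X : Polynomial k) ^ 2) ≠ 0 := by
        simpa using pow_ne_zero 2 (Polynomial.X_ne_zero (R := k))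
      exact (mul_eq_zero.1 h2).resolve_left hX2
    obtain ⟨r, rfl⟩ := (Polynomial.dvd_iff_isRoot).2 hq
    exact ⟨r, by rw [hC]; ring⟩
  · rintro ⟨r, rfl⟩
    constructor
    · simp [Polynomial.eval_mul, Polynomial.eval_sub, Polynomial.eval_pow]
    · rw [hC]
      simp only [Polynomial.eval_mul, Polynomial.eval_sub, Polynomial.eval_pow,
        Polynomial.eval_X, Polynomial.eval_C]
      ring

/-- The kernel of the normalization map `k[x,y] → k[t] × k[t]`,
`x ↦ (t,t)`, `y ↦ (0,t²)`, of the affine tacnode curve is the principal ideal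
generated by `y² − x²·y`. -/
theorem ker_normalization_tacnode (k : Type*) [Field k] :
    RingHom.ker (MvPolynomial.aeval
        (![(Polynomial.X, Polynomial.X), ((0 : Polynomial k), Polynomial.X ^ 2)] :
          Fin 2 → Polynomial k × Polynomial k) :
        MvPolynomial (Fin 2) k →ₐ[k] Polynomial k × Polynomial k) =
      Ideal.span {(MvPolynomial.X 1) ^ 2 - (MvPolynomial.X 0) ^ 2 * MvPolynomial.X 1} := by
  set g : MvPolynomial (Fin 2) k :=
    (MvPolynomial.X 1) ^ 2 - (MvPolynomial.X 0) ^ 2 * MvPolynomial.X 1 with hg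
  have hcomp : (MvPolynomial.aeval
        (![(Polynomial.X, Polynomial.X), ((0 : Polynomial k), Polynomial.X ^ 2)] :
          Fin 2 → Polynomial k × Polynomial k) :
        MvPolynomial (Fin 2) k →ₐ[k] Polynomial k × Polynomial k).toRingHom
      = (tacPhi k).comp (tacE k : MvPolynomial (Fin 2) k →+* Polynomial (Polynomial k)) := by
    apply MvPolynomial.ringHom_ext
    · intro a
      have h : tacE k (MvPolynomial.C a) = Polynomial.C (Polynomial.C a) := by
        have := (tacE k).commutes a
        simpa [MvPolynomial.algebraMap_eq, Polynomial.algebraMap_apply] using this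
      simp [h, tacPhi, Prod.ext_iff]
    · intro i
      fin_cases i
      · simp [tacPhi, tacE_X0, Prod.ext_iff]
      · simp [tacPhi, tacE_X1, Prod.ext_iff]
  have hEg : tacE k g = Polynomial.X ^ 2 - (Polynomial.C (Polynomial.X)) ^ 2 * Polynomial.X := by
    simp [hg, map_sub, map_pow, map_mul, tacE_X0, tacE_X1]
  have hker : RingHom.ker ((tacPhi k).comp
      (tacE k : MvPolynomial (Fin 2) k →+* Polynomial (Polynomial k))) = Ideal.span {g} := by
    rw [← RingHom.comap_ker, tacKerPhi, ← hEg]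
    ext p
    simp only [Ideal.mem_comap, Ideal.mem_span_singleton]
    constructor
    · rintro ⟨r, hr⟩
      refine ⟨(tacE k).symm r, ?_⟩
      apply (tacE k).injective
      rw [map_mul]
      simpa using hr
    · rintro ⟨r, rfl⟩
      exact ⟨tacE k r, map_mul (tacE k) g r⟩
  have hfun : ∀ p : MvPolynomial (Fin 2) k,
      (MvPolynomial.aeval
        (![(Polynomial.X, Polynomial.X), ((0 : Polynomial k), Polynomial.X ^ 2)] :
          Fin 2 → Polynomial k × Polynomial k)) p = (tacPhi k) (tacE k p) :=
    fun p => DFunLike.congr_fun hcomp p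
  ext p
  rw [RingHom.mem_ker, hfun p,
    show (tacPhi k) ((tacE k) p)
      = ((tacPhi k).comp (tacE k : MvPolynomial (Fin 2) k →+* Polynomial (Polynomial k))) p
      from rfl, ← RingHom.mem_ker, hker]
end

section
/- Let k be a field, let φ : k[x,y] → k[t] × k[t] be the k-algebra homomorphism with φ(x) = (t, t) and φ(y) = (0, t^2), and let R be the image of φ. Then the conductor of R in k[t] × k[t], namely {(a,b) ∈ k[t] × k[t] : (a·f, b·g) ∈ R for all (f,g) ∈ k[t] × k[t]}, equals t^2·k[t] × t^2·k[t], the ideal of k[t] × k[t] generated by (t^2, 0) and (0, t^2). -/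
/-!
The image of `φ` is exactly `{(f, g) | t² ∣ f - g}`. It is contained in that set because the
set is the equalizer of the two algebra maps `k[t] × k[t] → k[t]/(t²)` through either factor,
and both generators `(t, t)`, `(0, t²)` lie in it; conversely `(f, g) = (f, f) - (0, t²)·(h, h)`
when `f - g = t² h`, and the diagonal is the image of `k[x]`. Testing the conductor condition
against `(1, 0)` and `(0, 1)` then forces `t² ∣ a` and `t² ∣ b`, which clearly suffices.
-/

open Polynomial

section Tacnode

variable (R : Type*) [CommRing R]

noncomputable abbrev tacnodeNormalization : MvPolynomial (Fin 2) R →ₐ[R] R[X] × R[X] :=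
  MvPolynomial.aeval ![(X, X), (0, X ^ 2)]

theorem range_tacnodeNormalization_le_equalizer :
    (tacnodeNormalization R).range ≤
      ((Ideal.Quotient.mkₐ R (Ideal.span {(X ^ 2 : R[X])})).comp
          (AlgHom.fst R R[X] R[X])).equalizer
        ((Ideal.Quotient.mkₐ R (Ideal.span {(X ^ 2 : R[X])})).comp (AlgHom.snd R R[X] R[X])) := by
  intro x hx
  obtain ⟨q, rfl⟩ := (AlgHom.mem_range _).1 hx
  rw [AlgHom.mem_equalizer, ← AlgHom.comp_apply, ← AlgHom.comp_apply]
  congr 1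
  refine MvPolynomial.algHom_ext fun i => ?_
  fin_cases i <;> simp

variable {R}

theorem diag_mem_range_tacnodeNormalization (f : R[X]) :
    (f, f) ∈ (tacnodeNormalization R).range :=
  (AlgHom.mem_range _).2 ⟨Polynomial.aeval (MvPolynomial.X 0) f, by
    rw [← aeval_algHom_apply, aeval_prod_apply]
    simp⟩

theorem mem_range_tacnodeNormalization_iff (x : R[X] × R[X]) :
    x ∈ (tacnodeNormalization R).range ↔ X ^ 2 ∣ x.1 - x.2 := by
  constructor
  · intro h
    have := range_tacnodeNormalization_le_equalizer R h
    rw [AlgHom.mem_equalizer] at this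
    simpa [Ideal.Quotient.eq, Ideal.mem_span_singleton] using this
  · rintro ⟨h, hh⟩
    have hdecomp : x = (x.1, x.1) - (0, X ^ 2) * (h, h) := by
      ext <;> simp [← hh]
    have hX : ((0 : R[X]), (X : R[X]) ^ 2) ∈ (tacnodeNormalization R).range :=
      (AlgHom.mem_range _).2 ⟨MvPolynomial.X 1, by simp⟩
    rw [hdecomp]
    exact sub_mem (diag_mem_range_tacnodeNormalization x.1)
      (mul_mem hX (diag_mem_range_tacnodeNormalization h))

theorem forall_mul_mem_range_tacnodeNormalization_iff (p : R[X] × R[X]) :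
    (∀ q, p * q ∈ (tacnodeNormalization R).range) ↔ X ^ 2 ∣ p.1 ∧ X ^ 2 ∣ p.2 := by
  simp only [mem_range_tacnodeNormalization_iff, Prod.fst_mul, Prod.snd_mul]
  refine ⟨fun h => ⟨by simpa using h (1, 0), by simpa using h (0, 1)⟩, ?_⟩
  rintro ⟨h₁, h₂⟩ q
  exact dvd_sub (dvd_mul_of_dvd_left h₁ _) (dvd_mul_of_dvd_left h₂ _)

end Tacnode

theorem Prod.mem_span_pair_iff {A B : Type*} [CommSemiring A] [CommSemiring B] (a : A) (b : B)
    (p : A × B) : p ∈ Ideal.span {(a, 0), (0, b)} ↔ a ∣ p.1 ∧ b ∣ p.2 := by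
  rw [Ideal.mem_span_pair]
  constructor
  · rintro ⟨c, d, rfl⟩
    exact ⟨Dvd.intro_left c.1 (by simp), Dvd.intro_left d.2 (by simp)⟩
  · rintro ⟨⟨c, hc⟩, ⟨d, hd⟩⟩
    exact ⟨(c, 0), (0, d), by ext <;> simp [hc, hd] <;> ring⟩

/-- The conductor of the image of `k[x,y] → k[t] × k[t]` (`x ↦ (t,t)`, `y ↦ (0,t²)`,
the normalization of the tacnode) in `k[t] × k[t]` is `t²k[t] × t²k[t]`, the ideal
generated by `(t²,0)` and `(0,t²)`. -/
theorem conductor_tacnode (k : Type*) [Field k] (p : Polynomial k × Polynomial k) :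
    ((∀ q : Polynomial k × Polynomial k,
        p * q ∈ (MvPolynomial.aeval
          (![(Polynomial.X, Polynomial.X), ((0 : Polynomial k), Polynomial.X ^ 2)] :
            Fin 2 → Polynomial k × Polynomial k) :
          MvPolynomial (Fin 2) k →ₐ[k] Polynomial k × Polynomial k).range) ↔
      p ∈ Ideal.span ({((Polynomial.X ^ 2 : Polynomial k), (0 : Polynomial k)),
        ((0 : Polynomial k), (Polynomial.X ^ 2 : Polynomial k))} :
          Set (Polynomial k × Polynomial k))) ∧
    ((∀ q : Polynomial k × Polynomial k,
        p * q ∈ (MvPolynomial.aeval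
          (![(Polynomial.X, Polynomial.X), ((0 : Polynomial k), Polynomial.X ^ 2)] :
            Fin 2 → Polynomial k × Polynomial k) :
          MvPolynomial (Fin 2) k →ₐ[k] Polynomial k × Polynomial k).range) ↔
      (p.1 ∈ Ideal.span ({Polynomial.X ^ 2} : Set (Polynomial k)) ∧
       p.2 ∈ Ideal.span ({Polynomial.X ^ 2} : Set (Polynomial k)))) := by
  rw [forall_mul_mem_range_tacnodeNormalization_iff, Prod.mem_span_pair_iff,
    Ideal.mem_span_singleton, Ideal.mem_span_singleton]
  exact ⟨Iff.rfl, Iff.rfl⟩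
end

section
/- Let k be a field, let ψ : k[x,y] → k[t] × k[t] × k[t] be the k-algebra homomorphism with ψ(x) = (t, t, 0) and ψ(y) = (t, 0, t), and let R be the image of ψ. Then the conductor of R in k[t]^3, namely {(a,b,c) ∈ k[t]^3 : (a,b,c)·(f,g,h) ∈ R for all (f,g,h) ∈ k[t]^3}, equals t^2·k[t] × t^2·k[t] × t^2·k[t]; it is the ideal of k[t]^3 generated by the three elements ψ(x^2) = (t^2, t^2, 0), ψ(y^2) = (t^2, 0, t^2) and ψ(xy) = (t^2, 0, 0). -/
/-! The image of `ψ` is the subalgebra generated by `(t,t,0)` and `(t,0,t)`, so it lies in the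
subalgebra of triples `(f,g,h)` with `f(0) = g(0) = h(0)` and `f'(0) = g'(0) + h'(0)`. Multiplying a
conductor element by the idempotents `(1,0,0)`, `(0,1,0)`, `(0,0,1)` lands in that subalgebra, which
forces each component to vanish to order two at `t = 0`. Conversely
`(t²a, t²b, t²c) = ψ(xy·a(x) + x(x-y)·b(x) + y(y-x)·c(y))`, so the ideal `t²k[t]³` of `k[t]³` lies in
the image and hence in the conductor. -/

open Polynomial

theorem Polynomial.X_sq_dvd_iff {R : Type*} [Semiring R] {f : R[X]} :
    X ^ 2 ∣ f ↔ f.coeff 0 = 0 ∧ f.coeff 1 = 0 := by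
  simp [X_pow_dvd_iff, Nat.le_one_iff_eq_zero_or_eq_one, or_imp, forall_and]

namespace ThreeLines

variable {R : Type*} [CommRing R]

variable (R) in
noncomputable abbrev normalization : MvPolynomial (Fin 2) R →ₐ[R] R[X] × R[X] × R[X] :=
  MvPolynomial.aeval ![(X, X, 0), (X, 0, X)]

variable (R) in
def firstOrderSubalgebra : Subalgebra R (R[X] × R[X] × R[X]) where
  carrier := {p | p.1.coeff 0 = p.2.1.coeff 0 ∧ p.1.coeff 0 = p.2.2.coeff 0 ∧
    p.1.coeff 1 = p.2.1.coeff 1 + p.2.2.coeff 1}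
  mul_mem' := by
    rintro ⟨f, g, h⟩ ⟨F, G, H⟩ ⟨hfg, hfh, hf⟩ ⟨hFG, hFH, hF⟩
    simp only [Set.mem_ofPred_eq, Prod.mk_mul_mk, mul_coeff_zero, mul_coeff_one] at *
    refine ⟨by rw [hfg, hFG], by rw [hfh, hFH], ?_⟩
    rw [hf, hF, ← hfg, ← hfh, ← hFG, ← hFH]
    ring
  add_mem' := by
    rintro ⟨f, g, h⟩ ⟨F, G, H⟩ ⟨hfg, hfh, hf⟩ ⟨hFG, hFH, hF⟩
    simp only [Set.mem_ofPred_eq, Prod.mk_add_mk, coeff_add] at *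
    refine ⟨by rw [hfg, hFG], by rw [hfh, hFH], by rw [hf, hF]; ring⟩
  algebraMap_mem' r := by simp [coeff_C]

theorem mem_firstOrderSubalgebra {p : R[X] × R[X] × R[X]} :
    p ∈ firstOrderSubalgebra R ↔ p.1.coeff 0 = p.2.1.coeff 0 ∧ p.1.coeff 0 = p.2.2.coeff 0 ∧
      p.1.coeff 1 = p.2.1.coeff 1 + p.2.2.coeff 1 :=
  Iff.rfl

theorem range_normalization_le : (normalization R).range ≤ firstOrderSubalgebra R := by
  rw [MvPolynomial.aeval_range, Algebra.adjoin_le_iff, Set.range_subset_iff]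
  intro i
  fin_cases i <;> simp [mem_firstOrderSubalgebra]

theorem X_sq_dvd_of_forall_mul_mem {p : R[X] × R[X] × R[X]}
    (hp : ∀ q, p * q ∈ firstOrderSubalgebra R) : X ^ 2 ∣ p.1 ∧ X ^ 2 ∣ p.2.1 ∧ X ^ 2 ∣ p.2.2 := by
  obtain ⟨f, g, h⟩ := p
  have h₁ := hp (1, 0, 0)
  have h₂ := hp (0, 1, 0)
  have h₃ := hp (0, 0, 1)
  simp only [mem_firstOrderSubalgebra, Prod.mk_mul_mk, mul_one, mul_zero, coeff_zero,
    zero_add, add_zero] at h₁ h₂ h₃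
  obtain ⟨hf₀, -, hf₁⟩ := h₁
  obtain ⟨hg₀, -, hg₁⟩ := h₂
  obtain ⟨-, hh₀, hh₁⟩ := h₃
  simp only [X_sq_dvd_iff]
  exact ⟨⟨hf₀, hf₁⟩, ⟨hg₀.symm, hg₁.symm⟩, hh₀.symm, hh₁.symm⟩

theorem X_sq_mul_mem_range_normalization (a b c : R[X]) :
    (X ^ 2 * a, X ^ 2 * b, X ^ 2 * c) ∈ (normalization R).range := by
  let x : MvPolynomial (Fin 2) R := .X 0
  let y : MvPolynomial (Fin 2) R := .X 1
  refine ⟨x * y * aeval x a + x * (x - y) * aeval x b + y * (y - x) * aeval y c, ?_⟩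
  simp [x, y, ← aeval_algHom_apply, aeval_prod_apply, ← sq]

theorem forall_mul_mem_range_normalization_iff (p : R[X] × R[X] × R[X]) :
    (∀ q, p * q ∈ (normalization R).range) ↔ X ^ 2 ∣ p.1 ∧ X ^ 2 ∣ p.2.1 ∧ X ^ 2 ∣ p.2.2 := by
  refine ⟨fun hp ↦ X_sq_dvd_of_forall_mul_mem fun q ↦ range_normalization_le (hp q), ?_⟩
  rintro ⟨⟨a, ha⟩, ⟨b, hb⟩, ⟨c, hc⟩⟩ ⟨f, g, h⟩
  rw [show p = (X ^ 2 * a, X ^ 2 * b, X ^ 2 * c) by rw [← ha, ← hb, ← hc]]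
  simpa only [Prod.mk_mul_mk, mul_assoc] using
    X_sq_mul_mem_range_normalization (a * f) (b * g) (c * h)

end ThreeLines

theorem Ideal.span_triple_eq_prod {A : Type*} [CommRing A] (t : A) :
    Ideal.span {(t, t, 0), (t, 0, t), (t, 0, 0)} =
      (Ideal.span {t}).prod ((Ideal.span {t}).prod (Ideal.span {t})) := by
  refine le_antisymm ?_ ?_
  · rw [Ideal.span_le]
    have ht := Ideal.mem_span_singleton_self t
    simp [Set.insert_subset_iff, ht]
  · rintro ⟨a, b, c⟩ ⟨ha, hb, hc⟩
    obtain ⟨u, rfl⟩ := Ideal.mem_span_singleton'.mp ha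
    obtain ⟨v, rfl⟩ := Ideal.mem_span_singleton'.mp hb
    obtain ⟨w, rfl⟩ := Ideal.mem_span_singleton'.mp hc
    have hsum : ((u * t, v * t, w * t) : A × A × A) =
        (u - v - w, v, 0) * (t, 0, 0) + (v, v, 0) * (t, t, 0) + (w, 0, w) * (t, 0, t) := by
      simp only [Prod.mk_mul_mk, Prod.mk_add_mk]
      refine Prod.ext ?_ (Prod.ext ?_ ?_) <;> ring
    rw [hsum]
    refine Ideal.add_mem _ (Ideal.add_mem _ ?_ ?_) ?_ <;>
      exact Ideal.mul_mem_left _ _ (Ideal.subset_span (by simp))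

/-- The conductor of the image of `k[x,y] → k[t]³` (`x ↦ (t,t,0)`, `y ↦ (t,0,t)`,
the normalization of the three concurrent lines) in `k[t]³` is
`t²k[t] × t²k[t] × t²k[t]`, the ideal generated by the images of `x²`, `y²`, `xy`,
i.e. by `(t²,t²,0)`, `(t²,0,t²)` and `(t²,0,0)`. -/
theorem conductor_three_lines (k : Type*) [Field k]
    (p : Polynomial k × Polynomial k × Polynomial k) :
    ((∀ q : Polynomial k × Polynomial k × Polynomial k,
        p * q ∈ (MvPolynomial.aeval
          (![(Polynomial.X, Polynomial.X, (0 : Polynomial k)),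
             (Polynomial.X, (0 : Polynomial k), Polynomial.X)] :
            Fin 2 → Polynomial k × Polynomial k × Polynomial k) :
          MvPolynomial (Fin 2) k →ₐ[k] Polynomial k × Polynomial k × Polynomial k).range) ↔
      p ∈ Ideal.span
        ({((Polynomial.X ^ 2 : Polynomial k), (Polynomial.X ^ 2 : Polynomial k),
            (0 : Polynomial k)),
          ((Polynomial.X ^ 2 : Polynomial k), (0 : Polynomial k),
            (Polynomial.X ^ 2 : Polynomial k)),
          ((Polynomial.X ^ 2 : Polynomial k), (0 : Polynomial k), (0 : Polynomial k))} :
          Set (Polynomial k × Polynomial k × Polynomial k))) ∧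
    ((∀ q : Polynomial k × Polynomial k × Polynomial k,
        p * q ∈ (MvPolynomial.aeval
          (![(Polynomial.X, Polynomial.X, (0 : Polynomial k)),
             (Polynomial.X, (0 : Polynomial k), Polynomial.X)] :
            Fin 2 → Polynomial k × Polynomial k × Polynomial k) :
          MvPolynomial (Fin 2) k →ₐ[k] Polynomial k × Polynomial k × Polynomial k).range) ↔
      (p.1 ∈ Ideal.span ({Polynomial.X ^ 2} : Set (Polynomial k)) ∧
       p.2.1 ∈ Ideal.span ({Polynomial.X ^ 2} : Set (Polynomial k)) ∧
       p.2.2 ∈ Ideal.span ({Polynomial.X ^ 2} : Set (Polynomial k)))) := by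
  have key : (∀ q, p * q ∈ (ThreeLines.normalization k).range) ↔
      p.1 ∈ Ideal.span {X ^ 2} ∧ p.2.1 ∈ Ideal.span {X ^ 2} ∧ p.2.2 ∈ Ideal.span {X ^ 2} := by
    simpa only [Ideal.mem_span_singleton] using
      ThreeLines.forall_mul_mem_range_normalization_iff p
  rw [Ideal.span_triple_eq_prod]
  exact ⟨key, key⟩
end

section
/- Let k be an algebraically closed field, r ≥ 1 an integer, and β : {1,…,r} → {0,1} a block function with s_j = #{i : β(i) = j}. Then: (a) a brick for the nodal matrix problem exists if and only if gcd(s₀, s₁) = 1; (b) if gcd(s₀, s₁) = 1, then the determinant is constant on equivalence classes of bricks and induces a bijection from the set of equivalence classes of bricks onto k ∖ {0}. (Via the paper's equivalence of categories, this is Theorem 1.2(i) for the nodal Weierstrass cubic E : y²z = x³ + x²z: simple vector bundles of rank r and degree d exist iff gcd(r,d) = 1 and are classified by their determinant in Pic^d(E) ≅ k*.) -/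
/-!
Reindexing and transposition (which exchanges the two blocks) preserve the classification, so it
suffices to treat `β = sumBlock (Fin a) (Fin m)`, which is `0` on the first summand. If a block is
empty, admissible pairs are just the pairs `(S, S)`, so bricks are the invertible `1 × 1` matrices.
If `0 < m ≤ a`, write a brick as `M = [[P, Q], [R, T]]` with `Q` of size `a × m`. Then `Q` is
injective: a kernel vector `x` and a left kernel vector `y` of `Q` would give the admissible
endomorphism `(M x̃ ỹᵀ, x̃ ỹᵀ M)` of `M`, which is not scalar. Row and column operations then bring
`M` to a normal form `lift N` with `N` of size `(a - m) + m`, and `lift` is a bijection between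
bricks, and between their equivalence classes, that multiplies determinants by a fixed sign. As
`gcd(a, m) = gcd(a - m, m)`, the Euclidean algorithm, run as an induction on `a + m`, concludes.
-/

/-- A pair `(S, S')` of `r × r` matrices is admissible for the nodal matrix problem
with block function `β : Fin r → Fin 2` if both are block lower triangular and their
diagonal blocks coincide. -/
def NodalAdmissiblePair {k : Type*} [Field k] {r : ℕ} (β : Fin r → Fin 2)
    (S S' : Matrix (Fin r) (Fin r) k) : Prop :=
  (∀ i j, β i < β j → S i j = 0 ∧ S' i j = 0) ∧
  (∀ i j, β i = β j → S i j = S' i j)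

/-- A brick for the nodal matrix problem: an invertible matrix whose only
endomorphisms are scalar. -/
def NodalBrick {k : Type*} [Field k] {r : ℕ} (β : Fin r → Fin 2)
    (M : Matrix (Fin r) (Fin r) k) : Prop :=
  IsUnit M ∧
    ∀ S S' : Matrix (Fin r) (Fin r) k, NodalAdmissiblePair β S S' → S * M = M * S' →
      ∃ c : k, S = c • (1 : Matrix (Fin r) (Fin r) k) ∧
        S' = c • (1 : Matrix (Fin r) (Fin r) k)

/-- Equivalence of bricks for the nodal matrix problem. -/
def NodalEquiv {k : Type*} [Field k] {r : ℕ} (β : Fin r → Fin 2)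
    (M M' : Matrix (Fin r) (Fin r) k) : Prop :=
  ∃ S S' : Matrix (Fin r) (Fin r) k,
    NodalAdmissiblePair β S S' ∧ IsUnit S ∧ IsUnit S' ∧ S * M = M' * S'

open Matrix

namespace Matrix

theorem fromRows_add_fromRows {m₁ m₂ n R : Type*} [Add R] (A₁ B₁ : Matrix m₁ n R)
    (A₂ B₂ : Matrix m₂ n R) : fromRows A₁ A₂ + fromRows B₁ B₂ = fromRows (A₁ + B₁) (A₂ + B₂) := by
  ext (i | i) j <;> rfl

theorem fromCols_add_fromCols {m n₁ n₂ R : Type*} [Add R] (A₁ B₁ : Matrix m n₁ R)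
    (A₂ B₂ : Matrix m n₂ R) : fromCols A₁ A₂ + fromCols B₁ B₂ = fromCols (A₁ + B₁) (A₂ + B₂) := by
  ext i (j | j) <;> rfl

theorem fromBlocks_eq_smul_one_iff {m n R : Type*} [DecidableEq m] [DecidableEq n] [Semiring R]
    {P : Matrix m m R} {Q : Matrix m n R} {S : Matrix n m R} {T : Matrix n n R} {c : R} :
    fromBlocks P Q S T = c • 1 ↔ P = c • 1 ∧ Q = 0 ∧ S = 0 ∧ T = c • 1 := by
  simp only [← fromBlocks_one, fromBlocks_smul, fromBlocks_inj, smul_zero]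

theorem transpose_eq_smul_one_iff {n R : Type*} [DecidableEq n] [Semiring R] {S : Matrix n n R}
    {c : R} : Sᵀ = c • 1 ↔ S = c • 1 := by
  rw [← transpose_inj, transpose_transpose, transpose_smul, transpose_one]

section CommRing

variable {n R : Type*} [Fintype n] [DecidableEq n] [CommRing R]

theorem eq_det_smul_one_of_card_eq_one (hn : Fintype.card n = 1) (M : Matrix n n R) :
    M = M.det • 1 := by
  obtain ⟨_⟩ := Fintype.card_eq_one_iff_nonempty_unique.1 hn
  ext i j
  simp [det_unique, Subsingleton.elim i default, Subsingleton.elim j default]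

theorem eq_smul_one_of_inv_mul_mul_eq {X Y : Matrix n n R} (hX : IsUnit X.det) {c : R}
    (h : X⁻¹ * Y * X = c • 1) : Y = c • 1 :=
  calc Y = X * (X⁻¹ * Y * X) * X⁻¹ := by
        rw [Matrix.mul_assoc, mul_nonsing_inv_cancel_right _ _ hX,
          mul_nonsing_inv_cancel_left _ _ hX]
    _ = c • 1 := by rw [h, mul_smul_one, smul_mul, mul_nonsing_inv _ hX]

end CommRing

section Field

variable {k : Type*} [Field k]

theorem exists_vecMul_eq_zero_of_mulVec_eq_zero {m n : Type*} [Fintype m] [Fintype n]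
    [DecidableEq n] (hcard : Fintype.card n ≤ Fintype.card m) {Q : Matrix m n k} {x : n → k}
    (hx : x ≠ 0) (hQx : Q *ᵥ x = 0) : ∃ y ≠ 0, y ᵥ* Q = 0 := by
  by_contra! hy
  have hinj : Function.Injective Qᵀ.mulVecLin := by
    rw [← LinearMap.ker_eq_bot, LinearMap.ker_eq_bot']
    intro y hQy
    by_contra h
    exact hy y h (by simpa [mulVec_transpose] using hQy)
  have hrank : Q.rank = Fintype.card n := le_antisymm (rank_le_card_width Q) <| by
    rwa [← rank_transpose, Matrix.rank, LinearMap.finrank_range_of_inj hinj,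
      Module.finrank_fintype_fun_eq_card]
  have hker := LinearMap.finrank_range_add_finrank_ker Q.mulVecLin
  rw [← Matrix.rank, hrank, Module.finrank_fintype_fun_eq_card, Nat.add_eq_left,
    Submodule.finrank_eq_zero] at hker
  exact hx (by simpa [hker] using (LinearMap.mem_ker (f := Q.mulVecLin)).2 hQx)

theorem exists_isUnit_mul_eq_fromRows_zero_one {A B : Type*} [Fintype A] [DecidableEq A]
    [Fintype B] [DecidableEq B] {Q : Matrix (A ⊕ B) B k} (hQ : Function.Injective Q.mulVec) :
    ∃ G : Matrix (A ⊕ B) (A ⊕ B) k, IsUnit G ∧ G * Q = fromRows 0 1 := by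
  let f := Q.mulVecLin
  obtain ⟨C, hC⟩ := (LinearMap.range f).exists_isCompl
  have hCdim : Module.finrank k C = Module.finrank k (A → k) := by
    have := Submodule.finrank_add_eq_of_isCompl hC
    rw [LinearMap.finrank_range_of_inj hQ] at this
    simp only [Module.finrank_fintype_fun_eq_card, Fintype.card_sum] at this ⊢
    omega
  let e : (A ⊕ B → k) ≃ₗ[k] (A ⊕ B → k) :=
    (Submodule.prodEquivOfIsCompl _ _ hC).symm ≪≫ₗ
      ((LinearEquiv.ofInjective f hQ).symm.prodCongr (LinearEquiv.ofFinrankEq _ _ hCdim)) ≪≫ₗ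
      LinearEquiv.prodComm k _ _ ≪≫ₗ (LinearEquiv.sumArrowLequivProdArrow A B k k).symm
  have he : ∀ x, e (Q *ᵥ x) = fromRows 0 1 *ᵥ x := fun x => by
    have h₁ : (Submodule.prodEquivOfIsCompl _ _ hC).symm (f x) = (⟨f x, ⟨x, rfl⟩⟩, 0) :=
      Submodule.prodEquivOfIsCompl_symm_apply_left _ _ hC ⟨f x, _⟩
    have h₂ : (LinearEquiv.ofInjective f hQ).symm ⟨f x, ⟨x, rfl⟩⟩ = x :=
      (LinearEquiv.ofInjective f hQ).symm_apply_apply x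
    change e (f x) = _
    simp only [e, LinearEquiv.trans_apply, h₁, LinearEquiv.prodCongr_apply, h₂, map_zero]
    ext (i | i) <;> simp [fromRows_mulVec]
  refine ⟨LinearMap.toMatrix' e, ?_, ext_of_mulVec_single fun i => ?_⟩
  · rw [isUnit_iff_isUnit_det, LinearMap.det_toMatrix']
    exact LinearEquiv.isUnit_det' e
  · rw [← mulVec_mulVec, LinearMap.toMatrix'_mulVec]
    exact he _

end Field

end Matrix

namespace NodalMatrixProblem

variable {k : Type*} [Field k] {ι κ : Type*}

-- The notions of the statement over an arbitrary index type: for `ι = Fin r`, `IsAdmissible`,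
-- `IsBrick` and `Equivalent` are `NodalAdmissiblePair`, `NodalBrick` and `NodalEquiv`.
def IsAdmissible (β : ι → Fin 2) (S S' : Matrix ι ι k) : Prop :=
  (∀ i j, β i < β j → S i j = 0 ∧ S' i j = 0) ∧
  (∀ i j, β i = β j → S i j = S' i j)

def IsBrick [Fintype ι] [DecidableEq ι] (β : ι → Fin 2) (M : Matrix ι ι k) : Prop :=
  IsUnit M ∧
    ∀ S S' : Matrix ι ι k, IsAdmissible β S S' → S * M = M * S' →
      ∃ c : k, S = c • (1 : Matrix ι ι k) ∧ S' = c • (1 : Matrix ι ι k)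

def Equivalent [Fintype ι] [DecidableEq ι] (β : ι → Fin 2) (M M' : Matrix ι ι k) : Prop :=
  ∃ S S' : Matrix ι ι k, IsAdmissible β S S' ∧ IsUnit S ∧ IsUnit S' ∧ S * M = M' * S'

def blockCard [Fintype ι] (β : ι → Fin 2) (b : Fin 2) : ℕ :=
  (Finset.univ.filter fun i => β i = b).card

variable (k) in
structure BricksClassifiedByDet [Fintype ι] [DecidableEq ι] (β : ι → Fin 2) : Prop where
  gcd_eq_one_of_isBrick :
    ∀ M : Matrix ι ι k, IsBrick β M → (blockCard β 0).gcd (blockCard β 1) = 1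
  exists_isBrick_det_eq : (blockCard β 0).gcd (blockCard β 1) = 1 →
    ∀ c : k, c ≠ 0 → ∃ M : Matrix ι ι k, IsBrick β M ∧ M.det = c
  equivalent_of_det_eq : ∀ M M' : Matrix ι ι k, IsBrick β M → IsBrick β M' →
    M.det = M'.det → Equivalent β M M'

def sumBlock (A B : Type*) : A ⊕ B → Fin 2 := Sum.elim (fun _ => 0) (fun _ => 1)

def sumBlockEquiv (β : ι → Fin 2) : ι ≃ {i // β i = 0} ⊕ {i // ¬β i = 0} :=
  (Equiv.sumCompl fun i => β i = 0).symm

theorem sumBlock_sumBlockEquiv (β : ι → Fin 2) (i : ι) :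
    sumBlock _ _ (sumBlockEquiv β i) = β i := by
  by_cases h : β i = 0
  · rw [sumBlockEquiv, Equiv.sumCompl_symm_apply_of_pos (p := fun j => β j = 0) h, h]
    rfl
  · rw [sumBlockEquiv, Equiv.sumCompl_symm_apply_of_neg (p := fun j => β j = 0) h,
      Fin.eq_one_of_ne_zero _ h]
    rfl

theorem rev_comp_rev (β : ι → Fin 2) : Fin.rev ∘ Fin.rev ∘ β = β := by
  ext
  simp

section Admissible

variable {β : ι → Fin 2} {γ : κ → Fin 2}

theorem isAdmissible_reindex_iff (e : ι ≃ κ) (hβ : ∀ i, γ (e i) = β i) {S S' : Matrix ι ι k} :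
    IsAdmissible γ (reindex e e S) (reindex e e S') ↔ IsAdmissible β S S' := by
  simp only [IsAdmissible, ← e.forall_congr_right, reindex_apply, submatrix_apply,
    e.symm_apply_apply, hβ]

theorem isAdmissible_transpose_iff {S S' : Matrix ι ι k} :
    IsAdmissible (Fin.rev ∘ β) S'ᵀ Sᵀ ↔ IsAdmissible β S S' := by
  simp only [IsAdmissible, Function.comp_apply, Fin.rev_lt_rev, Fin.rev_inj, transpose_apply]
  exact ⟨fun ⟨h₁, h₂⟩ => ⟨fun i j h => (h₁ j i h).symm, fun i j h => (h₂ j i h.symm).symm⟩,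
    fun ⟨h₁, h₂⟩ => ⟨fun i j h => (h₁ j i h).symm, fun i j h => (h₂ j i h.symm).symm⟩⟩

theorem isAdmissible_iff_eq_of_const (hβ : ∀ i j, β i = β j) {S S' : Matrix ι ι k} :
    IsAdmissible β S S' ↔ S = S' := by
  refine ⟨fun h => ext fun i j => h.2 i j (hβ i j), ?_⟩
  rintro rfl
  exact ⟨fun i j hij => absurd (hβ i j) hij.ne, fun _ _ _ => rfl⟩

theorem isAdmissible_sumBlock_iff {A B : Type*} {S S' : Matrix (A ⊕ B) (A ⊕ B) k} :
    IsAdmissible (sumBlock A B) S S' ↔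
      ∃ α c c' d, S = fromBlocks α 0 c d ∧ S' = fromBlocks α 0 c' d := by
  constructor
  · intro h
    have h₁₂ := fun i j => h.1 (Sum.inl i) (Sum.inr j) zero_lt_one
    have h₁₁ := fun i j => (h.2 (Sum.inl i) (Sum.inl j) rfl).symm
    have h₂₂ := fun i j => (h.2 (Sum.inr i) (Sum.inr j) rfl).symm
    refine ⟨S.toBlocks₁₁, S.toBlocks₂₁, S'.toBlocks₂₁, S.toBlocks₂₂, ?_, ?_⟩ <;>
      ext (i | i) (j | j) <;> simp [toBlocks₁₁, toBlocks₂₁, toBlocks₂₂, h₁₁, h₁₂, h₂₂]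
  · rintro ⟨α, c, c', d, rfl, rfl⟩
    refine ⟨?_, ?_⟩ <;> rintro (i | i) (j | j) h <;> simp_all [sumBlock]

end Admissible

section BlockCard

variable [Fintype ι] [Fintype κ] {β : ι → Fin 2} {γ : κ → Fin 2}

theorem blockCard_reindex (e : ι ≃ κ) (hβ : ∀ i, γ (e i) = β i) (b : Fin 2) :
    blockCard γ b = blockCard β b := by
  simp only [blockCard, ← Fintype.card_subtype]
  exact Fintype.card_congr (e.subtypeEquiv fun i => by rw [hβ]).symm

theorem blockCard_rev (β : ι → Fin 2) (b : Fin 2) :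
    blockCard (Fin.rev ∘ β) b = blockCard β b.rev := by
  simp only [blockCard, Function.comp_apply, Fin.rev_eq_iff]

theorem blockCard_sumBlock_zero {A B : Type*} [Fintype A] [Fintype B] :
    blockCard (sumBlock A B) 0 = Fintype.card A := by
  rw [blockCard, Finset.card_filter, Fintype.sum_sum_type]
  simp [sumBlock]

theorem blockCard_sumBlock_one {A B : Type*} [Fintype A] [Fintype B] :
    blockCard (sumBlock A B) 1 = Fintype.card B := by
  rw [blockCard, Finset.card_filter, Fintype.sum_sum_type]
  simp [sumBlock]

end BlockCard

section Bricks

variable [Fintype ι] [DecidableEq ι] [Fintype κ] [DecidableEq κ] {β : ι → Fin 2} {γ : κ → Fin 2}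

theorem IsAdmissible.det_eq {S S' : Matrix ι ι k} (h : IsAdmissible β S S') :
    S.det = S'.det := by
  have hS : S.BlockTriangular (OrderDual.toDual ∘ β) := fun i j hij => (h.1 i j hij).1
  have hS' : S'.BlockTriangular (OrderDual.toDual ∘ β) := fun i j hij => (h.1 i j hij).2
  rw [hS.det_fintype, hS'.det_fintype]
  refine Finset.prod_congr rfl fun b _ => congrArg det ?_
  ext i j
  exact h.2 i j (i.2.trans j.2.symm)

theorem Equivalent.det_eq {M M' : Matrix ι ι k} (h : Equivalent β M M') : M.det = M'.det := by
  obtain ⟨S, S', hSS', -, hS', hMM'⟩ := h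
  have hdet := congrArg det hMM'
  rw [det_mul, det_mul, hSS'.det_eq, mul_comm] at hdet
  exact mul_right_cancel₀ ((isUnit_iff_isUnit_det S').1 hS').ne_zero hdet

section AlgEquiv

variable (f : Matrix ι ι k ≃ₐ[k] Matrix κ κ k)
  (hf : ∀ S S', IsAdmissible γ (f S) (f S') ↔ IsAdmissible β S S')
include hf

theorem isBrick_map_iff {M : Matrix ι ι k} : IsBrick γ (f M) ↔ IsBrick β M := by
  have hscalar : ∀ (S : Matrix ι ι k) (c : k), f S = c • 1 ↔ S = c • 1 := fun S c => by
    rw [← map_one f, ← map_smul, f.injective.eq_iff]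
  simp only [IsBrick, isUnit_map_iff, f.surjective.forall, hf, ← map_mul, f.injective.eq_iff,
    hscalar]

theorem equivalent_map_iff {M M' : Matrix ι ι k} :
    Equivalent γ (f M) (f M') ↔ Equivalent β M M' := by
  simp only [Equivalent, f.surjective.exists, hf, isUnit_map_iff, ← map_mul, f.injective.eq_iff]

end AlgEquiv

theorem BricksClassifiedByDet.reindex (e : ι ≃ κ) (hβ : ∀ i, γ (e i) = β i)
    (h : BricksClassifiedByDet k γ) : BricksClassifiedByDet k β := by
  let f := reindexAlgEquiv k k e
  have hf : ∀ S S', IsAdmissible γ (f S) (f S') ↔ IsAdmissible β S S' :=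
    fun _ _ => isAdmissible_reindex_iff e hβ
  have hdet : ∀ M, (f M).det = M.det := fun M => det_reindex_self e M
  have hgcd : (blockCard γ 0).gcd (blockCard γ 1) = (blockCard β 0).gcd (blockCard β 1) := by
    rw [blockCard_reindex e hβ, blockCard_reindex e hβ]
  refine ⟨fun M hM => hgcd ▸ h.gcd_eq_one_of_isBrick (f M) ((isBrick_map_iff f hf).2 hM),
    fun hg c hc => ?_, fun M M' hM hM' hMM' => ?_⟩
  · obtain ⟨N, hN, rfl⟩ := h.exists_isBrick_det_eq (hgcd ▸ hg) c hc
    refine ⟨f.symm N, ?_, ?_⟩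
    · rwa [← isBrick_map_iff f hf, f.apply_symm_apply]
    · rw [← hdet, f.apply_symm_apply]
  · rw [← equivalent_map_iff f hf]
    exact h.equivalent_of_det_eq _ _ ((isBrick_map_iff f hf).2 hM) ((isBrick_map_iff f hf).2 hM')
      (by rwa [hdet, hdet])

theorem IsBrick.transpose {M : Matrix ι ι k} (hM : IsBrick β M) : IsBrick (Fin.rev ∘ β) Mᵀ := by
  refine ⟨(isUnit_transpose M).2 hM.1, fun T T' hTT' hMT => ?_⟩
  rw [← transpose_transpose T, ← transpose_transpose T', isAdmissible_transpose_iff] at hTT'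
  have hMT' : T'ᵀ * M = M * Tᵀ := by
    rw [← transpose_inj, transpose_mul, transpose_mul, transpose_transpose, transpose_transpose,
      hMT]
  obtain ⟨c, hT', hT⟩ := hM.2 _ _ hTT' hMT'
  exact ⟨c, transpose_eq_smul_one_iff.1 hT, transpose_eq_smul_one_iff.1 hT'⟩

theorem Equivalent.transpose {M M' : Matrix ι ι k} (h : Equivalent β M M') :
    Equivalent (Fin.rev ∘ β) M'ᵀ Mᵀ := by
  obtain ⟨S, S', hSS', hS, hS', hMM'⟩ := h
  refine ⟨S'ᵀ, Sᵀ, isAdmissible_transpose_iff.2 hSS', (isUnit_transpose S').2 hS',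
    (isUnit_transpose S).2 hS, ?_⟩
  rw [← transpose_mul, ← transpose_mul, hMM']

theorem BricksClassifiedByDet.of_rev (h : BricksClassifiedByDet k (Fin.rev ∘ β)) :
    BricksClassifiedByDet k β := by
  have hgcd : (blockCard (Fin.rev ∘ β) 0).gcd (blockCard (Fin.rev ∘ β) 1) =
      (blockCard β 0).gcd (blockCard β 1) := by
    rw [blockCard_rev, blockCard_rev, Nat.gcd_comm]
    rfl
  refine ⟨fun M hM => hgcd ▸ h.gcd_eq_one_of_isBrick _ hM.transpose, fun hg c hc => ?_,
    fun M M' hM hM' hMM' => ?_⟩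
  · obtain ⟨N, hN, rfl⟩ := h.exists_isBrick_det_eq (hgcd ▸ hg) c hc
    exact ⟨Nᵀ, rev_comp_rev β ▸ hN.transpose, det_transpose N⟩
  · have h' := (h.equivalent_of_det_eq _ _ hM'.transpose hM.transpose
      (by rw [det_transpose, det_transpose, hMM'])).transpose
    rwa [rev_comp_rev, transpose_transpose, transpose_transpose] at h'

theorem IsBrick.subsingleton_of_const (hβ : ∀ i j, β i = β j) {M : Matrix ι ι k}
    (hM : IsBrick β M) : Subsingleton ι := by
  have hscalar : ∀ S : Matrix ι ι k, S * M = M * S → ∃ c : k, S = c • 1 := fun S hS =>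
    (hM.2 S S ((isAdmissible_iff_eq_of_const hβ).2 rfl) hS).imp fun _ => And.left
  obtain ⟨c, rfl⟩ := hscalar M rfl
  refine ⟨fun i j => by_contra fun hij => ?_⟩
  obtain ⟨d, hd⟩ := hscalar (single i j 1) (by rw [mul_smul_one, smul_one_mul])
  simpa [hij] using congrFun₂ hd i j

theorem BricksClassifiedByDet.of_const [Nonempty ι] (b : Fin 2) (hβ : ∀ i, β i = b) :
    BricksClassifiedByDet k β := by
  have hβ' : ∀ i j, β i = β j := fun i j => (hβ i).trans (hβ j).symm
  have hgcd : (blockCard β 0).gcd (blockCard β 1) = Fintype.card ι := by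
    fin_cases b <;> simp [blockCard, hβ]
  have hcard : ∀ M : Matrix ι ι k, IsBrick β M → Fintype.card ι = 1 := fun M hM =>
    le_antisymm (Fintype.card_le_one_iff_subsingleton.2 (hM.subsingleton_of_const hβ'))
      Fintype.card_pos
  have hdet : ∀ c : k, Fintype.card ι = 1 → (c • 1 : Matrix ι ι k).det = c := fun c hι => by
    rw [det_smul, det_one, hι, pow_one, mul_one]
  refine ⟨fun M hM => hgcd ▸ hcard M hM, fun hι c hc => ?_, fun M M' hM _ hMM' => ?_⟩
  · rw [hgcd] at hι
    refine ⟨c • 1, ⟨(isUnit_iff_isUnit_det _).2 ((hdet c hι).symm ▸ hc.isUnit),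
      fun S S' hSS' _ => ?_⟩, hdet c hι⟩
    obtain rfl := (isAdmissible_iff_eq_of_const hβ').1 hSS'
    exact ⟨S.det, eq_det_smul_one_of_card_eq_one hι S, eq_det_smul_one_of_card_eq_one hι S⟩
  · have hι := hcard M hM
    have hMM'' : M = M' := by
      rw [eq_det_smul_one_of_card_eq_one hι M, eq_det_smul_one_of_card_eq_one hι M', hMM']
    exact ⟨1, 1, (isAdmissible_iff_eq_of_const hβ').2 rfl, isUnit_one, isUnit_one,
      by rw [hMM'', one_mul, mul_one]⟩

theorem IsAdmissible.mul_of_sumBlock {A B : Type*} [Fintype A] [Fintype B]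
    {S₁ S₁' S₂ S₂' : Matrix (A ⊕ B) (A ⊕ B) k} (h₁ : IsAdmissible (sumBlock A B) S₁ S₁')
    (h₂ : IsAdmissible (sumBlock A B) S₂ S₂') :
    IsAdmissible (sumBlock A B) (S₁ * S₂) (S₁' * S₂') := by
  obtain ⟨α₁, c₁, c₁', d₁, rfl, rfl⟩ := isAdmissible_sumBlock_iff.1 h₁
  obtain ⟨α₂, c₂, c₂', d₂, rfl, rfl⟩ := isAdmissible_sumBlock_iff.1 h₂
  simp only [fromBlocks_multiply, Matrix.mul_zero, Matrix.zero_mul, add_zero]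
  exact isAdmissible_sumBlock_iff.2 ⟨_, _, _, _, rfl, rfl⟩

theorem IsAdmissible.inv_of_sumBlock {A B : Type*} [Fintype A] [DecidableEq A] [Fintype B]
    [DecidableEq B] {S S' : Matrix (A ⊕ B) (A ⊕ B) k} (h : IsAdmissible (sumBlock A B) S S')
    (hS : IsUnit S) : IsAdmissible (sumBlock A B) S⁻¹ S'⁻¹ := by
  obtain ⟨α, c, c', d, rfl, rfl⟩ := isAdmissible_sumBlock_iff.1 h
  obtain ⟨hα, hd⟩ := isUnit_fromBlocks_zero₁₂.1 hS
  have hαd : IsUnit α ↔ IsUnit d := iff_of_true hα hd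
  rw [inv_fromBlocks_zero₁₂_of_isUnit_iff _ _ _ hαd, inv_fromBlocks_zero₁₂_of_isUnit_iff _ _ _ hαd]
  exact isAdmissible_sumBlock_iff.2 ⟨_, _, _, _, rfl, rfl⟩

theorem IsAdmissible.mul {S₁ S₁' S₂ S₂' : Matrix ι ι k} (h₁ : IsAdmissible β S₁ S₁')
    (h₂ : IsAdmissible β S₂ S₂') : IsAdmissible β (S₁ * S₂) (S₁' * S₂') := by
  simp only [← isAdmissible_reindex_iff _ (sumBlock_sumBlockEquiv β),
    ← coe_reindexAlgEquiv k k, map_mul] at h₁ h₂ ⊢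
  exact h₁.mul_of_sumBlock h₂

theorem IsAdmissible.inv {S S' : Matrix ι ι k} (h : IsAdmissible β S S') (hS : IsUnit S) :
    IsAdmissible β S⁻¹ S'⁻¹ := by
  rw [← isAdmissible_reindex_iff _ (sumBlock_sumBlockEquiv β)] at h ⊢
  have hS' : IsUnit (reindex (sumBlockEquiv β) (sumBlockEquiv β) S) := by
    rw [← coe_reindexAlgEquiv k k]
    exact hS.map _
  simpa only [inv_reindex] using h.inv_of_sumBlock hS'

theorem Equivalent.symm {M M' : Matrix ι ι k} (h : Equivalent β M M') : Equivalent β M' M := by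
  obtain ⟨S, S', hSS', hS, hS', hMM'⟩ := h
  refine ⟨S⁻¹, S'⁻¹, hSS'.inv hS, isUnit_nonsing_inv_iff.2 hS, isUnit_nonsing_inv_iff.2 hS', ?_⟩
  rw [isUnit_iff_isUnit_det] at hS hS'
  calc S⁻¹ * M' = S⁻¹ * (M' * S' * S'⁻¹) := by rw [mul_nonsing_inv_cancel_right _ _ hS']
    _ = M * S'⁻¹ := by rw [← hMM', Matrix.mul_assoc, nonsing_inv_mul_cancel_left _ _ hS]

theorem Equivalent.trans {M₁ M₂ M₃ : Matrix ι ι k} (h₁₂ : Equivalent β M₁ M₂)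
    (h₂₃ : Equivalent β M₂ M₃) : Equivalent β M₁ M₃ := by
  obtain ⟨S, S', hSS', hS, hS', h⟩ := h₁₂
  obtain ⟨T, T', hTT', hT, hT', h'⟩ := h₂₃
  refine ⟨T * S, T' * S', hTT'.mul hSS', hT.mul hS, hT'.mul hS', ?_⟩
  rw [Matrix.mul_assoc, h, ← Matrix.mul_assoc, h', Matrix.mul_assoc]

theorem IsBrick.of_equivalent {M M' : Matrix ι ι k} (h : Equivalent β M M') (hM : IsBrick β M) :
    IsBrick β M' := by
  obtain ⟨S, S', hSS', hS, hS', hMM'⟩ := h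
  have hS₀ := (isUnit_iff_isUnit_det S).1 hS
  have hS'₀ := (isUnit_iff_isUnit_det S').1 hS'
  have hM' : M' = S * M * S'⁻¹ := by rw [hMM', mul_nonsing_inv_cancel_right _ _ hS'₀]
  refine ⟨hM' ▸ (hS.mul hM.1).mul (isUnit_nonsing_inv_iff.2 hS'), fun T T' hTT' hT => ?_⟩
  have hconj : (S⁻¹ * T * S) * M = M * (S'⁻¹ * T' * S') := by
    have := congrArg (fun X => S⁻¹ * X * S') hT
    simpa only [hM', Matrix.mul_assoc, nonsing_inv_mul _ hS'₀, Matrix.mul_one,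
      nonsing_inv_mul_cancel_left _ _ hS₀] using this
  obtain ⟨c, hc, hc'⟩ := hM.2 _ _ (((hSS'.inv hS).mul hTT').mul hSS') hconj
  exact ⟨c, eq_smul_one_of_inv_mul_mul_eq hS₀ hc, eq_smul_one_of_inv_mul_mul_eq hS'₀ hc'⟩

end Bricks

section SumBlock

variable {A B : Type*} [Fintype A] [DecidableEq A] [Fintype B] [DecidableEq B]

theorem IsBrick.eq_zero_or_eq_zero {P : Matrix A A k} {Q : Matrix A B k} {R : Matrix B A k}
    {T : Matrix B B k} (hM : IsBrick (sumBlock A B) (fromBlocks P Q R T)) {x : B → k} {y : A → k}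
    (hx : Q *ᵥ x = 0) (hy : y ᵥ* Q = 0) : x = 0 ∨ y = 0 := by
  -- the endomorphism `(M x̃ ỹᵀ, x̃ ỹᵀ M)` of `M`, where `x̃ = (0, x)` and `ỹ = (y, 0)`
  have hSM : fromBlocks 0 0 (vecMulVec (T *ᵥ x) y) 0 * fromBlocks P Q R T =
      fromBlocks P Q R T * fromBlocks 0 0 (vecMulVec x (y ᵥ* P)) 0 := by
    simp [fromBlocks_multiply, vecMulVec_mul, mul_vecMulVec, hx, hy]
  obtain ⟨c, hc, -⟩ := hM.2 _ _ (isAdmissible_sumBlock_iff.2 ⟨0, _, _, 0, rfl, rfl⟩) hSM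
  obtain ⟨-, -, hc, -⟩ := fromBlocks_eq_smul_one_iff.1 hc
  refine or_iff_not_imp_right.2 fun hy0 => ?_
  obtain ⟨j, hj⟩ := Function.ne_iff.1 hy0
  have hTx : T *ᵥ x = 0 := funext fun i =>
    (mul_eq_zero.1 (congrFun₂ hc i j)).resolve_right hj
  have hMx : fromBlocks P Q R T *ᵥ Sum.elim 0 x = 0 := by
    simp [fromBlocks_mulVec, hx, hTx]
  have := (mulVec_injective_iff_isUnit.2 hM.1) (hMx.trans (mulVec_zero _).symm)
  exact funext fun i => congrFun this (Sum.inr i)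

theorem IsBrick.injective_mulVec (hcard : Fintype.card B ≤ Fintype.card A) {P : Matrix A A k}
    {Q : Matrix A B k} {R : Matrix B A k} {T : Matrix B B k}
    (hM : IsBrick (sumBlock A B) (fromBlocks P Q R T)) : Function.Injective Q.mulVec := by
  intro x x' hxx'
  by_contra hne
  have hQx : Q *ᵥ (x - x') = 0 := by rw [mulVec_sub, hxx', sub_self]
  obtain ⟨y, hy0, hy⟩ := exists_vecMul_eq_zero_of_mulVec_eq_zero hcard (sub_ne_zero.2 hne) hQx
  exact (hM.eq_zero_or_eq_zero hQx hy).elim (fun h => hne (sub_eq_zero.1 h)) hy0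

end SumBlock

section Lift

variable {A B : Type*} [DecidableEq B]

/-- The block matrix `[[N₁₁, N₁₂, 0], [0, 0, 1], [N₂₁, N₂₂, 0]]` with respect to `A ⊕ B ⊕ B`:
a normal form for bricks of `sumBlock (A ⊕ B) B`. -/
def lift (N : Matrix (A ⊕ B) (A ⊕ B) k) : Matrix ((A ⊕ B) ⊕ B) ((A ⊕ B) ⊕ B) k :=
  fromBlocks (fromBlocks N.toBlocks₁₁ N.toBlocks₁₂ 0 0) (fromRows 0 1)
    (fromCols N.toBlocks₂₁ N.toBlocks₂₂) 0

theorem lift_fromBlocks (p : Matrix A A k) (q : Matrix A B k) (u : Matrix B A k)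
    (v : Matrix B B k) :
    lift (fromBlocks p q u v) =
      fromBlocks (fromBlocks p q 0 0) (fromRows 0 1) (fromCols u v) 0 := by
  simp only [lift, toBlocks_fromBlocks₁₁, toBlocks_fromBlocks₁₂, toBlocks_fromBlocks₂₁,
    toBlocks_fromBlocks₂₂]

-- Exchanges the two copies of `B`.
def liftPerm (A B : Type*) : Equiv.Perm ((A ⊕ B) ⊕ B) :=
  (Equiv.sumAssoc A B B).trans
    (((Equiv.refl A).sumCongr (Equiv.sumComm B B)).trans (Equiv.sumAssoc A B B).symm)

theorem submatrix_liftPerm_lift (N : Matrix (A ⊕ B) (A ⊕ B) k) :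
    (lift N).submatrix (liftPerm A B) id = fromBlocks N 0 0 1 := by
  ext (⟨i | i⟩ | i) (⟨j | j⟩ | j) <;>
    simp [lift, liftPerm, one_apply, toBlocks₁₁, toBlocks₁₂, toBlocks₂₁, toBlocks₂₂]

variable [Fintype A] [Fintype B]

theorem fromBlocks_mul_lift_eq_lift_mul_iff {α : Matrix A A k} {a₂ : Matrix A B k}
    {c c' : Matrix B A k} {c₂ d d' : Matrix B B k} {g : Matrix B (A ⊕ B) k}
    {p p' : Matrix A A k} {q q' : Matrix A B k} {u u' : Matrix B A k} {v v' : Matrix B B k} :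
    fromBlocks (fromBlocks α a₂ c' d') 0 (fromCols c c₂) d * lift (fromBlocks p q u v) =
        lift (fromBlocks p' q' u' v') * fromBlocks (fromBlocks α a₂ c' d') 0 g d ↔
      a₂ = 0 ∧ d' = d ∧ c₂ = 0 ∧ g = fromCols (c' * p) (c' * q) ∧
        fromBlocks α 0 c d * fromBlocks p q u v = fromBlocks p' q' u' v' * fromBlocks α 0 c' d := by
  simp only [lift_fromBlocks, fromBlocks_multiply, fromBlocks_mul_fromRows,
    fromCols_mul_fromBlocks, fromCols_mul_fromRows, fromRows_mul, mul_fromCols, fromBlocks_inj,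
    Matrix.mul_zero, Matrix.zero_mul, add_zero, zero_add, Matrix.mul_one, Matrix.one_mul]
  simp only [← fromRows_fromCols_eq_fromBlocks, fromCols_zero, fromRows_add_fromRows,
    fromCols_add_fromCols, fromRows_ext_iff, fromCols_ext_iff, add_zero, zero_add]
  constructor
  · rintro ⟨⟨⟨h₁, h₂⟩, rfl⟩, ⟨rfl, rfl⟩, ⟨h₃, h₄⟩, rfl⟩
    simp_all
  · rintro ⟨rfl, rfl, rfl, rfl, h₁, h₂, h₃, h₄⟩
    simp_all

variable [DecidableEq A]

theorem sign_liftPerm_mul_det_lift (N : Matrix (A ⊕ B) (A ⊕ B) k) :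
    ((Equiv.Perm.sign (liftPerm A B) : ℤ) : k) * (lift N).det = N.det := by
  rw [← det_permute, submatrix_liftPerm_lift, det_fromBlocks_zero₂₁, det_one, mul_one]

theorem det_lift_one_ne_zero : (lift (1 : Matrix (A ⊕ B) (A ⊕ B) k)).det ≠ 0 :=
  right_ne_zero_of_mul_eq_one ((sign_liftPerm_mul_det_lift _).trans det_one)

theorem det_lift (N : Matrix (A ⊕ B) (A ⊕ B) k) :
    (lift N).det = (lift (1 : Matrix (A ⊕ B) (A ⊕ B) k)).det * N.det := by
  have h₁ := sign_liftPerm_mul_det_lift (1 : Matrix (A ⊕ B) (A ⊕ B) k)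
  rw [det_one] at h₁
  rw [← sign_liftPerm_mul_det_lift N, ← mul_assoc, mul_comm (lift 1).det, h₁, one_mul]

theorem isUnit_lift_iff {N : Matrix (A ⊕ B) (A ⊕ B) k} : IsUnit (lift N) ↔ IsUnit N := by
  rw [isUnit_iff_isUnit_det, isUnit_iff_isUnit_det N, det_lift, IsUnit.mul_iff,
    and_iff_right (isUnit_iff_ne_zero.2 det_lift_one_ne_zero)]

theorem equivalent_lift {p : Matrix A A k} {q : Matrix A B k} {r : Matrix B A k}
    {s T : Matrix B B k} {R₁ : Matrix B A k} {R₂ : Matrix B B k} :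
    Equivalent (sumBlock (A ⊕ B) B)
      (fromBlocks (fromBlocks p q r s) (fromRows 0 1) (fromCols R₁ R₂) T)
      (lift (fromBlocks p q (R₁ - T * r) (R₂ - T * s))) := by
  have hunit : ∀ C : Matrix B (A ⊕ B) k, IsUnit (fromBlocks 1 0 C 1) := fun _ =>
    isUnit_fromBlocks_zero₁₂.2 ⟨isUnit_one, isUnit_one⟩
  -- a row operation clears `T` against the identity block of `fromRows 0 1`, and a column
  -- operation clears the rows `[r, s]`
  refine ⟨fromBlocks 1 0 (fromCols 0 (-T)) 1, fromBlocks 1 0 (fromCols r s) 1,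
    isAdmissible_sumBlock_iff.2 ⟨_, _, _, _, rfl, rfl⟩, hunit _, hunit _, ?_⟩
  simp only [lift_fromBlocks, fromBlocks_multiply, fromCols_mul_fromBlocks,
    fromCols_mul_fromRows, fromRows_mul, Matrix.mul_zero, Matrix.zero_mul, add_zero, zero_add,
    Matrix.mul_one, Matrix.one_mul, neg_add_cancel]
  simp only [← fromRows_fromCols_eq_fromBlocks, fromCols_zero, fromRows_add_fromRows,
    fromCols_add_fromCols, add_zero, zero_add, Matrix.neg_mul, neg_add_eq_sub]

theorem IsBrick.exists_equivalent_lift {M : Matrix ((A ⊕ B) ⊕ B) ((A ⊕ B) ⊕ B) k}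
    (hM : IsBrick (sumBlock (A ⊕ B) B) M) : ∃ N, Equivalent (sumBlock (A ⊕ B) B) M (lift N) := by
  obtain ⟨P, Q, R, T, rfl⟩ : ∃ P Q R T, M = fromBlocks P Q R T :=
    ⟨_, _, _, _, (fromBlocks_toBlocks M).symm⟩
  obtain ⟨G, hG, hGQ⟩ := exists_isUnit_mul_eq_fromRows_zero_one
    (hM.injective_mulVec (by simp only [Fintype.card_sum, Nat.le_add_left]))
  have hG₀ := (isUnit_iff_isUnit_det G).1 hG
  have hGG : IsUnit (fromBlocks G 0 0 1 : Matrix ((A ⊕ B) ⊕ B) ((A ⊕ B) ⊕ B) k) :=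
    isUnit_fromBlocks_zero₁₂.2 ⟨hG, isUnit_one⟩
  have h : Equivalent (sumBlock (A ⊕ B) B) (fromBlocks P Q R T)
      (fromBlocks (G * P * G⁻¹) (fromRows 0 1) (R * G⁻¹) T) := by
    refine ⟨_, _, isAdmissible_sumBlock_iff.2 ⟨_, _, _, _, rfl, rfl⟩, hGG, hGG, ?_⟩
    simp only [fromBlocks_multiply, Matrix.mul_zero, Matrix.zero_mul, add_zero, zero_add,
      Matrix.mul_one, Matrix.one_mul, Matrix.mul_assoc, nonsing_inv_mul _ hG₀, hGQ]
  rw [← fromBlocks_toBlocks (G * P * G⁻¹), ← fromCols_toCols (R * G⁻¹)] at h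
  exact ⟨_, h.trans equivalent_lift⟩

theorem isBrick_lift_iff {N : Matrix (A ⊕ B) (A ⊕ B) k} :
    IsBrick (sumBlock (A ⊕ B) B) (lift N) ↔ IsBrick (sumBlock A B) N := by
  obtain ⟨p, q, u, v, rfl⟩ : ∃ p q u v, N = fromBlocks p q u v :=
    ⟨_, _, _, _, (fromBlocks_toBlocks N).symm⟩
  refine and_congr isUnit_lift_iff ⟨fun h S S' hSS' hSN => ?_, fun h S S' hSS' hSN => ?_⟩
  · obtain ⟨α, c, c', d, rfl, rfl⟩ := isAdmissible_sumBlock_iff.1 hSS'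
    obtain ⟨e, he, -⟩ := h _ _ (isAdmissible_sumBlock_iff.2 ⟨fromBlocks α 0 c' d, fromCols c 0,
      fromCols (c' * p) (c' * q), d, rfl, rfl⟩)
      (fromBlocks_mul_lift_eq_lift_mul_iff.2 ⟨rfl, rfl, rfl, rfl, hSN⟩)
    obtain ⟨hα, -, hc, rfl⟩ := fromBlocks_eq_smul_one_iff.1 he
    obtain ⟨rfl, -, rfl, -⟩ := fromBlocks_eq_smul_one_iff.1 hα
    obtain rfl : c = 0 := ((fromCols_ext_iff _ _ _ _).1 (hc.trans fromCols_zero.symm)).1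
    exact ⟨e, fromBlocks_eq_smul_one_iff.2 ⟨rfl, rfl, rfl, rfl⟩,
      fromBlocks_eq_smul_one_iff.2 ⟨rfl, rfl, rfl, rfl⟩⟩
  · obtain ⟨X, Y, Y', Z, rfl, rfl⟩ := isAdmissible_sumBlock_iff.1 hSS'
    obtain ⟨α, a₂, c', d', rfl⟩ : ∃ α a₂ c' d', X = fromBlocks α a₂ c' d' :=
      ⟨_, _, _, _, (fromBlocks_toBlocks X).symm⟩
    obtain ⟨c, c₂, rfl⟩ : ∃ c c₂, Y = fromCols c c₂ := ⟨_, _, (fromCols_toCols Y).symm⟩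
    obtain ⟨rfl, rfl, rfl, rfl, hSN'⟩ := fromBlocks_mul_lift_eq_lift_mul_iff.1 hSN
    obtain ⟨e, he, he'⟩ := h _ _ (isAdmissible_sumBlock_iff.2 ⟨_, _, _, _, rfl, rfl⟩) hSN'
    obtain ⟨rfl, -, rfl, rfl⟩ := fromBlocks_eq_smul_one_iff.1 he
    obtain ⟨-, -, rfl, -⟩ := fromBlocks_eq_smul_one_iff.1 he'
    refine ⟨e, ?_, ?_⟩ <;> simp [fromBlocks_eq_smul_one_iff]

theorem Equivalent.lift {N N' : Matrix (A ⊕ B) (A ⊕ B) k} (h : Equivalent (sumBlock A B) N N') :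
    Equivalent (sumBlock (A ⊕ B) B) (lift N) (lift N') := by
  obtain ⟨p, q, u, v, rfl⟩ : ∃ p q u v, N = fromBlocks p q u v :=
    ⟨_, _, _, _, (fromBlocks_toBlocks N).symm⟩
  obtain ⟨p', q', u', v', rfl⟩ : ∃ p q u v, N' = fromBlocks p q u v :=
    ⟨_, _, _, _, (fromBlocks_toBlocks N').symm⟩
  obtain ⟨S, S', hSS', hS, -, hSN⟩ := h
  obtain ⟨α, c, c', d, rfl, rfl⟩ := isAdmissible_sumBlock_iff.1 hSS'
  obtain ⟨hα, hd⟩ := isUnit_fromBlocks_zero₁₂.1 hS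
  have hunit : ∀ C, IsUnit (fromBlocks (fromBlocks α 0 c' d) 0 C d) := fun _ =>
    isUnit_fromBlocks_zero₁₂.2 ⟨isUnit_fromBlocks_zero₁₂.2 ⟨hα, hd⟩, hd⟩
  exact ⟨_, _, isAdmissible_sumBlock_iff.2 ⟨fromBlocks α 0 c' d, fromCols c 0,
    fromCols (c' * p) (c' * q), d, rfl, rfl⟩, hunit _, hunit _,
    fromBlocks_mul_lift_eq_lift_mul_iff.2 ⟨rfl, rfl, rfl, rfl, hSN⟩⟩

theorem BricksClassifiedByDet.sum_left (h : BricksClassifiedByDet k (sumBlock A B)) :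
    BricksClassifiedByDet k (sumBlock (A ⊕ B) B) := by
  have hgcd : (blockCard (sumBlock (A ⊕ B) B) 0).gcd (blockCard (sumBlock (A ⊕ B) B) 1) =
      (blockCard (sumBlock A B) 0).gcd (blockCard (sumBlock A B) 1) := by
    simp only [blockCard_sumBlock_zero, blockCard_sumBlock_one, Fintype.card_sum,
      Nat.gcd_add_self_left]
  refine ⟨fun M hM => ?_, fun hg c hc => ?_, fun M M' hM hM' hMM' => ?_⟩
  · obtain ⟨N, hN⟩ := hM.exists_equivalent_lift
    exact hgcd ▸ h.gcd_eq_one_of_isBrick N (isBrick_lift_iff.1 (hM.of_equivalent hN))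
  · obtain ⟨N, hN, hNc⟩ := h.exists_isBrick_det_eq (hgcd ▸ hg)
      (c / (lift (1 : Matrix (A ⊕ B) (A ⊕ B) k)).det) (div_ne_zero hc det_lift_one_ne_zero)
    exact ⟨lift N, isBrick_lift_iff.2 hN,
      by rw [det_lift, hNc, mul_div_cancel₀ _ det_lift_one_ne_zero]⟩
  · obtain ⟨N, hN⟩ := hM.exists_equivalent_lift
    obtain ⟨N', hN'⟩ := hM'.exists_equivalent_lift
    have hdet : N.det = N'.det := by
      have := hN.det_eq.symm.trans (hMM'.trans hN'.det_eq)
      rwa [det_lift N, det_lift N', mul_right_inj' det_lift_one_ne_zero] at this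
    have hNN' := h.equivalent_of_det_eq N N' (isBrick_lift_iff.1 (hM.of_equivalent hN))
      (isBrick_lift_iff.1 (hM'.of_equivalent hN')) hdet
    exact hN.trans (hNN'.lift.trans hN'.symm)

theorem BricksClassifiedByDet.swap (h : BricksClassifiedByDet k (sumBlock B A)) :
    BricksClassifiedByDet k (sumBlock A B) :=
  of_rev (h.reindex (Equiv.sumComm A B) (by rintro (i | i) <;> rfl))

theorem BricksClassifiedByDet.sum_right (h : BricksClassifiedByDet k (sumBlock A B)) :
    BricksClassifiedByDet k (sumBlock A (B ⊕ A)) :=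
  h.swap.sum_left.swap

end Lift

theorem bricksClassifiedByDet_sumBlock_fin (a m : ℕ) (hpos : 0 < a + m) :
    BricksClassifiedByDet k (sumBlock (Fin a) (Fin m)) := by
  induction hn : a + m using Nat.strong_induction_on generalizing a m with
  | _ n ih =>
    rcases Nat.eq_zero_or_pos m with rfl | hm
    · have : Nonempty (Fin a ⊕ Fin 0) := ⟨Sum.inl ⟨0, hpos⟩⟩
      exact .of_const 0 (by rintro (i | i); exacts [rfl, i.elim0])
    rcases Nat.eq_zero_or_pos a with rfl | ha
    · have : Nonempty (Fin 0 ⊕ Fin m) := ⟨Sum.inr ⟨0, hm⟩⟩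
      exact .of_const 1 (by rintro (i | i); exacts [i.elim0, rfl])
    rcases le_or_gt m a with hle | hlt
    · obtain ⟨a, rfl⟩ : ∃ a', a = a' + m := ⟨a - m, by omega⟩
      exact (ih (a + m) (by omega) a m (by omega) rfl).sum_left.reindex
        (finSumFinEquiv.symm.sumCongr (Equiv.refl _)) (by rintro (i | i) <;> rfl)
    · obtain ⟨m, rfl⟩ : ∃ m', m = m' + a := ⟨m - a, by omega⟩
      exact (ih (a + m) (by omega) a m (by omega) rfl).sum_right.reindex
        ((Equiv.refl _).sumCongr finSumFinEquiv.symm) (by rintro (i | i) <;> rfl)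

theorem bricksClassifiedByDet [Fintype ι] [DecidableEq ι] [Nonempty ι] (β : ι → Fin 2) :
    BricksClassifiedByDet k β := by
  let e := (sumBlockEquiv β).trans ((Fintype.equivFin _).sumCongr (Fintype.equivFin _))
  refine (bricksClassifiedByDet_sumBlock_fin _ _ ?_).reindex e fun i => ?_
  · rw [← Fintype.card_sum, ← Fintype.card_congr (sumBlockEquiv β)]
    exact Fintype.card_pos
  · simp only [e, Equiv.trans_apply, Equiv.sumCongr_apply]
    rw [← sumBlock_sumBlockEquiv β i]
    rcases sumBlockEquiv β i with j | j <;> rfl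

end NodalMatrixProblem

theorem nodal_bricks_classification_general (k : Type*) [Field k]
    (r : ℕ) (hr : 1 ≤ r) (β : Fin r → Fin 2) :
    ((∃ M : Matrix (Fin r) (Fin r) k, NodalBrick β M) ↔
      Nat.gcd (Finset.univ.filter fun i => β i = 0).card
        (Finset.univ.filter fun i => β i = 1).card = 1) ∧
    (Nat.gcd (Finset.univ.filter fun i => β i = 0).card
        (Finset.univ.filter fun i => β i = 1).card = 1 →
      (∀ M M' : Matrix (Fin r) (Fin r) k, NodalBrick β M → NodalBrick β M' →
        NodalEquiv β M M' → M.det = M'.det) ∧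
      (∀ M : Matrix (Fin r) (Fin r) k, NodalBrick β M → M.det ≠ 0) ∧
      (∀ M M' : Matrix (Fin r) (Fin r) k, NodalBrick β M → NodalBrick β M' →
        M.det = M'.det → NodalEquiv β M M') ∧
      (∀ c : k, c ≠ 0 → ∃ M : Matrix (Fin r) (Fin r) k, NodalBrick β M ∧ M.det = c)) := by
  have : Nonempty (Fin r) := ⟨⟨0, hr⟩⟩
  have h := NodalMatrixProblem.bricksClassifiedByDet (k := k) β
  refine ⟨⟨fun ⟨M, hM⟩ => h.gcd_eq_one_of_isBrick M hM, fun hgcd => ?_⟩, fun hgcd =>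
    ⟨fun _ _ _ _ hMM' => NodalMatrixProblem.Equivalent.det_eq hMM',
      fun M hM => ((Matrix.isUnit_iff_isUnit_det M).1 hM.1).ne_zero,
      h.equivalent_of_det_eq, h.exists_isBrick_det_eq hgcd⟩⟩
  obtain ⟨M, hM, -⟩ := h.exists_isBrick_det_eq hgcd 1 one_ne_zero
  exact ⟨M, hM⟩

/-- Classification of bricks for the nodal matrix problem: bricks exist iff
`gcd(s₀,s₁) = 1`, and then the determinant induces a bijection from equivalence
classes of bricks onto `k ∖ {0}`. -/
theorem nodal_bricks_classification (k : Type*) [Field k] [IsAlgClosed k]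
    (r : ℕ) (hr : 1 ≤ r) (β : Fin r → Fin 2) :
    ((∃ M : Matrix (Fin r) (Fin r) k, NodalBrick β M) ↔
      Nat.gcd (Finset.univ.filter fun i => β i = 0).card
        (Finset.univ.filter fun i => β i = 1).card = 1) ∧
    (Nat.gcd (Finset.univ.filter fun i => β i = 0).card
        (Finset.univ.filter fun i => β i = 1).card = 1 →
      (∀ M M' : Matrix (Fin r) (Fin r) k, NodalBrick β M → NodalBrick β M' →
        NodalEquiv β M M' → M.det = M'.det) ∧
      (∀ M : Matrix (Fin r) (Fin r) k, NodalBrick β M → M.det ≠ 0) ∧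
      (∀ M M' : Matrix (Fin r) (Fin r) k, NodalBrick β M → NodalBrick β M' →
        M.det = M'.det → NodalEquiv β M M') ∧
      (∀ c : k, c ≠ 0 → ∃ M : Matrix (Fin r) (Fin r) k, NodalBrick β M ∧ M.det = c)) :=
  nodal_bricks_classification_general k r hr β
end

section
/- Let k be an algebraically closed field, r ≥ 1, and β : {1,…,r} → {0,1} a block function with s_j = #{i : β(i) = j}. If M ∈ GL_r(k) is a brick for the nodal matrix problem, then the submatrix of M with rows {i : β(i) = 0} and columns {j : β(j) = 1} has maximal rank, i.e. rank equal to min(s₀, s₁). -/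
/-!
If the block `A` of `M` (rows in block 0, columns in block 1) had rank below `min(s₀, s₁)`,
there would be nonzero vectors `v`, supported in block 1, and `w`, supported in block 0, with
`A v = 0` and `wᵀ A = 0`. The rank-one matrices `S = (M v) wᵀ` and `S' = v (wᵀ M)` then form an
admissible pair with `S M = (M v)(wᵀ M) = M S'`, which is not scalar: `S'` vanishes on the
diagonal of block 0, while `S ≠ 0` because `M` is invertible.
-/

open Matrix Function

namespace Matrix

variable {m n : Type*}

theorem exists_mulVec_eq_zero_of_rank_lt {K : Type*} [Field K] [Fintype n] (A : Matrix m n K)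
    (h : A.rank < Fintype.card n) : ∃ v : n → K, v ≠ 0 ∧ A *ᵥ v = 0 := by
  have hker : LinearMap.ker A.mulVecLin ≠ ⊥ := by
    rw [← LinearMap.ker_rangeRestrict]
    exact LinearMap.ker_ne_bot_of_finrank_lt (by rwa [Module.finrank_fintype_fun_eq_card])
  obtain ⟨v, hv, hv0⟩ := (Submodule.ne_bot_iff _).mp hker
  exact ⟨v, hv0, hv⟩

theorem mulVec_extend_zero {α n' : Type*} [NonUnitalNonAssocSemiring α] [Fintype n] [Fintype n']
    (M : Matrix m n α) {g : n' → n} (hg : Injective g) (v : n' → α) :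
    M *ᵥ extend g v 0 = M.submatrix id g *ᵥ v := by
  ext i
  refine (Fintype.sum_of_injective g hg _ _ (fun j hj => ?_) (fun j => ?_)).symm
  · simp [extend_apply' _ _ _ hj]
  · simp [hg.extend_apply]

variable {K : Type*} [Field K] [Fintype n]

theorem exists_ne_zero_mulVec_eq_zero_on_of_rank_submatrix_lt (M : Matrix m n K)
    (p : m → Prop) (q : n → Prop) [DecidablePred q]
    (h : (M.submatrix (↑) (↑) : Matrix {i // p i} {j // q j} K).rank < Fintype.card {j // q j}) :
    ∃ v : n → K, v ≠ 0 ∧ (∀ j, ¬ q j → v j = 0) ∧ ∀ i, p i → (M *ᵥ v) i = 0 := by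
  obtain ⟨v, hv0, hAv⟩ := exists_mulVec_eq_zero_of_rank_lt _ h
  refine ⟨extend Subtype.val v 0, fun h0 => hv0 ?_, fun j hj => ?_, fun i hi => ?_⟩
  · rw [← extend_comp Subtype.val_injective v 0, h0]
    rfl
  · exact extend_apply' _ _ _ fun ⟨a, ha⟩ => hj (ha ▸ a.2)
  · rw [mulVec_extend_zero M Subtype.val_injective]
    exact congrFun hAv ⟨i, hi⟩

theorem exists_ne_zero_vecMul_eq_zero_on_of_rank_submatrix_lt [Fintype m] (M : Matrix m n K)
    (p : m → Prop) (q : n → Prop) [DecidablePred p] [DecidablePred q]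
    (h : (M.submatrix (↑) (↑) : Matrix {i // p i} {j // q j} K).rank < Fintype.card {i // p i}) :
    ∃ w : m → K, w ≠ 0 ∧ (∀ i, ¬ p i → w i = 0) ∧ ∀ j, q j → (w ᵥ* M) j = 0 := by
  simp_rw [← mulVec_transpose]
  refine exists_ne_zero_mulVec_eq_zero_on_of_rank_submatrix_lt Mᵀ q p ?_
  rwa [← transpose_submatrix, rank_transpose]

end Matrix

section Nodal

variable {k : Type*} [Field k] {r : ℕ} {β : Fin r → Fin 2} {M : Matrix (Fin r) (Fin r) k}
  {v w : Fin r → k}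

theorem nodalAdmissiblePair_vecMulVec (hv : ∀ j, β j ≠ 1 → v j = 0)
    (hMv : ∀ i, β i = 0 → (M *ᵥ v) i = 0) (hw : ∀ i, β i ≠ 0 → w i = 0)
    (hwM : ∀ j, β j = 1 → (w ᵥ* M) j = 0) :
    NodalAdmissiblePair β (vecMulVec (M *ᵥ v) w) (vecMulVec v (w ᵥ* M)) := by
  refine ⟨fun i j hij => ?_, fun i j hij => ?_⟩
  · have hi : β i = 0 := by omega
    simp [vecMulVec_apply, hMv i hi, hv i (by omega)]
  · obtain hi | hi : β i = 0 ∨ β i = 1 := by omega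
    · simp [vecMulVec_apply, hMv i hi, hv i (by omega)]
    · simp [vecMulVec_apply, hw j (by omega), hwM j (by omega)]

theorem NodalBrick.eq_zero_or_eq_zero (hM : NodalBrick β M) (hv : ∀ j, β j ≠ 1 → v j = 0)
    (hMv : ∀ i, β i = 0 → (M *ᵥ v) i = 0) (hw : ∀ i, β i ≠ 0 → w i = 0)
    (hwM : ∀ j, β j = 1 → (w ᵥ* M) j = 0) : v = 0 ∨ w = 0 := by
  obtain ⟨c, hS, hS'⟩ := hM.2 _ _ (nodalAdmissiblePair_vecMulVec hv hMv hw hwM)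
    (by rw [vecMulVec_mul, mul_vecMulVec])
  refine or_iff_not_imp_right.mpr fun hw0 => ?_
  obtain ⟨i₀, hi₀⟩ := Function.ne_iff.mp hw0
  have hβi₀ : β i₀ = 0 := by_contra fun h => hi₀ (hw i₀ h)
  have hc : c = 0 := by
    simpa [vecMulVec_apply, hv i₀ (by omega), eq_comm] using congrFun₂ hS' i₀ i₀
  rw [hc, zero_smul, vecMulVec_eq_zero] at hS
  have hMv0 : M *ᵥ v = M *ᵥ 0 := by rw [hS.resolve_right hw0, mulVec_zero]
  exact mulVec_injective_iff_isUnit.mpr hM.1 hMv0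

end Nodal

theorem nodal_brick_block_maximal_rank_general (k : Type*) [Field k]
    (r : ℕ) (β : Fin r → Fin 2)
    (M : Matrix (Fin r) (Fin r) k) (hM : NodalBrick β M) :
    (Matrix.of fun (i : {i : Fin r // β i = 0}) (j : {j : Fin r // β j = 1}) =>
        M i.1 j.1).rank =
      min (Fintype.card {i : Fin r // β i = 0}) (Fintype.card {j : Fin r // β j = 1}) := by
  set A : Matrix {i : Fin r // β i = 0} {j : Fin r // β j = 1} k := M.submatrix (↑) (↑)
  refine le_antisymm (le_min A.rank_le_card_height A.rank_le_card_width) ?_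
  by_contra! hlt
  rw [lt_min_iff] at hlt
  obtain ⟨v, hv0, hv, hMv⟩ :=
    M.exists_ne_zero_mulVec_eq_zero_on_of_rank_submatrix_lt (β · = 0) (β · = 1) hlt.2
  obtain ⟨w, hw0, hw, hwM⟩ :=
    M.exists_ne_zero_vecMul_eq_zero_on_of_rank_submatrix_lt (β · = 0) (β · = 1) hlt.1
  exact (hM.eq_zero_or_eq_zero hv hMv hw hwM).elim hv0 hw0

/-- For a brick of the nodal matrix problem, the block with rows in block 0 and
columns in block 1 has maximal rank `min(s₀, s₁)` (Proposition 6.3 of the paper). -/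
theorem nodal_brick_block_maximal_rank (k : Type*) [Field k] [IsAlgClosed k]
    (r : ℕ) (hr : 1 ≤ r) (β : Fin r → Fin 2)
    (M : Matrix (Fin r) (Fin r) k) (hM : NodalBrick β M) :
    (Matrix.of fun (i : {i : Fin r // β i = 0}) (j : {j : Fin r // β j = 1}) =>
        M i.1 j.1).rank =
      min (Fintype.card {i : Fin r // β i = 0}) (Fintype.card {j : Fin r // β j = 1}) :=
  nodal_brick_block_maximal_rank_general k r β M hM
end

section
/- Let k be an algebraically closed field, r ≥ 1, and β : {1,…,r} → {0,1} a block function with s_j = #{i : β(i) = j}. If M is a brick for the cuspidal matrix problem, then the submatrix of M with rows {i : β(i) = 0} and columns {j : β(j) = 1} has maximal rank, i.e. rank equal to min(s₀, s₁). -/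
/-!
If the block `B` of rows in block 0 and columns in block 1 is rank-deficient, it has both a
nonzero right null vector `v` and a nonzero left null vector `u`. Placing the rank-one matrix
`v uᵀ` in the (1,0) block gives a nonzero endomorphism whose defining relations only see the
entries of `B v` and `uᵀ B`, so it is a morphism that is not a scalar multiple of the identity.
-/

/-- An admissible matrix for the cuspidal matrix problem: block upper triangular. -/
def CuspAdmissible {k : Type*} [Field k] {r : ℕ} (β : Fin r → Fin 2)
    (M : Matrix (Fin r) (Fin r) k) : Prop :=
  ∀ i j, ¬ β i ≤ β j → M i j = 0

/-- A morphism `S` from an admissible matrix `M` to an admissible matrix `M'`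
in the cuspidal matrix problem. -/
def CuspHom {k : Type*} [Field k] {r : ℕ} (β : Fin r → Fin 2)
    (M M' S : Matrix (Fin r) (Fin r) k) : Prop :=
  (∀ i j, β i < β j → S i j = 0) ∧
  (∀ i j, β i ≤ β j → (S * M - M' * S) i j = 0)

/-- A brick for the cuspidal matrix problem. -/
def CuspBrick {k : Type*} [Field k] {r : ℕ} (β : Fin r → Fin 2)
    (M : Matrix (Fin r) (Fin r) k) : Prop :=
  CuspAdmissible β M ∧
    ∀ S : Matrix (Fin r) (Fin r) k, CuspHom β M M S →
      ∃ c : k, S = c • (1 : Matrix (Fin r) (Fin r) k)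

open Matrix

namespace Matrix

variable {m n K R : Type*}

theorem exists_mulVec_eq_zero_of_rank_lt_card_width [Field K] [Fintype n] [DecidableEq n]
    (B : Matrix m n K) (h : B.rank < Fintype.card n) : ∃ v ≠ 0, B *ᵥ v = 0 := by
  by_contra! hinj
  have hker : LinearMap.ker B.mulVecLin = ⊥ := LinearMap.ker_eq_bot'.mpr fun v hv =>
    by_contra fun hv0 => hinj v hv0 hv
  have hrank := LinearMap.finrank_range_add_finrank_ker B.mulVecLin
  rw [hker, finrank_bot, add_zero, Module.finrank_pi] at hrank
  exact h.ne hrank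

theorem exists_vecMul_eq_zero_of_rank_lt_card_height [Field K] [Fintype m] [Fintype n]
    [DecidableEq m] (B : Matrix m n K) (h : B.rank < Fintype.card m) :
    ∃ u ≠ 0, u ᵥ* B = 0 := by
  simpa only [mulVec_transpose] using
    Bᵀ.exists_mulVec_eq_zero_of_rank_lt_card_width (by rwa [rank_transpose])

theorem mulVec_extend_val [CommSemiring R] [Fintype n] {p : n → Prop} [DecidablePred p]
    (M : Matrix m n R) (v : Subtype p → R) :
    M *ᵥ Subtype.val.extend v 0 = M.submatrix id Subtype.val *ᵥ v := by
  ext i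
  simp only [mulVec, dotProduct]
  rw [← Fintype.sum_subtype_add_sum_subtype p, Fintype.sum_eq_zero (α := {j // ¬p j}) _
    fun j => by rw [Function.extend_val_apply' j.2, Pi.zero_apply, mul_zero], add_zero]
  simp only [Subtype.val_injective.extend_apply, submatrix_apply, id]

theorem extend_val_vecMul [CommSemiring R] [Fintype m] {p : m → Prop} [DecidablePred p]
    (M : Matrix m n R) (u : Subtype p → R) :
    Subtype.val.extend u 0 ᵥ* M = u ᵥ* M.submatrix Subtype.val id := by
  rw [← mulVec_transpose, mulVec_extend_val, ← mulVec_transpose]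
  rfl

theorem vecMulVec_apply_eq_zero_of_eq_smul_one [CommSemiring R] [DecidableEq n] {x y : n → R}
    {c : R} (h : vecMulVec x y = c • (1 : Matrix n n R)) {i j : n} (hij : i ≠ j) :
    x i * y j = 0 := by
  simpa [vecMulVec_apply, one_apply_ne hij] using congr_fun₂ h i j

end Matrix

theorem cuspHom_vecMulVec {k : Type*} [Field k] {r : ℕ} {β : Fin r → Fin 2}
    {M : Matrix (Fin r) (Fin r) k} {x y : Fin r → k}
    (hx : ∀ i, β i = 0 → x i = 0) (hy : ∀ j, β j = 1 → y j = 0)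
    (hMx : ∀ i, β i = 0 → (M *ᵥ x) i = 0) (hyM : ∀ j, β j = 1 → (y ᵥ* M) j = 0) :
    CuspHom β M M (vecMulVec x y) := by
  have block : ∀ i : Fin r, β i = 0 ∨ β i = 1 := fun i => by omega
  refine ⟨fun i j hij => ?_, fun i j hij => ?_⟩
  · rw [vecMulVec_apply, hx i (by omega), zero_mul]
  · rw [vecMulVec_mul, mul_vecMulVec, Matrix.sub_apply, vecMulVec_apply, vecMulVec_apply]
    rcases block i with hi | hi
    · rw [hx i hi, hMx i hi, zero_mul, zero_mul, sub_zero]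
    · have hj : β j = 1 := by omega
      rw [hyM j hj, hy j hj, mul_zero, mul_zero, sub_zero]

theorem cuspidal_brick_block_maximal_rank_general (k : Type*) [Field k]
    (r : ℕ) (β : Fin r → Fin 2)
    (M : Matrix (Fin r) (Fin r) k) (hM : CuspBrick β M) :
    (Matrix.of fun (i : {i : Fin r // β i = 0}) (j : {j : Fin r // β j = 1}) =>
        M i.1 j.1).rank =
      min (Fintype.card {i : Fin r // β i = 0}) (Fintype.card {j : Fin r // β j = 1}) := by
  set B : Matrix {i : Fin r // β i = 0} {j : Fin r // β j = 1} k :=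
    M.submatrix Subtype.val Subtype.val
  change B.rank = _
  refine le_antisymm (le_min B.rank_le_card_height B.rank_le_card_width) ?_
  by_contra! hlt
  obtain ⟨v, hv0, hBv⟩ := B.exists_mulVec_eq_zero_of_rank_lt_card_width
    (hlt.trans_le (min_le_right _ _))
  obtain ⟨u, hu0, huB⟩ := B.exists_vecMul_eq_zero_of_rank_lt_card_height
    (hlt.trans_le (min_le_left _ _))
  have hS : CuspHom β M M (vecMulVec (Subtype.val.extend v 0) (Subtype.val.extend u 0)) :=
    cuspHom_vecMulVec
      (fun i hi => Function.extend_val_apply' (by rw [hi]; decide))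
      (fun j hj => Function.extend_val_apply' (by rw [hj]; decide))
      (fun i hi => by rw [M.mulVec_extend_val]; exact congr_fun hBv ⟨i, hi⟩)
      (fun j hj => by rw [M.extend_val_vecMul]; exact congr_fun huB ⟨j, hj⟩)
  obtain ⟨c, hc⟩ := hM.2 _ hS
  obtain ⟨j, hj⟩ := Function.ne_iff.mp hv0
  obtain ⟨i, hi⟩ := Function.ne_iff.mp hu0
  have hji : j.1 ≠ i.1 := fun h => by simpa [h, i.2] using j.2
  have hoff := vecMulVec_apply_eq_zero_of_eq_smul_one hc hji
  rw [Subtype.val_injective.extend_apply, Subtype.val_injective.extend_apply] at hoff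
  exact mul_ne_zero hj hi hoff

/-- For a brick of the cuspidal matrix problem, the block with rows in block 0 and
columns in block 1 has maximal rank `min(s₀, s₁)` (Proposition 6.3 of the paper). -/
theorem cuspidal_brick_block_maximal_rank (k : Type*) [Field k] [IsAlgClosed k]
    (r : ℕ) (hr : 1 ≤ r) (β : Fin r → Fin 2)
    (M : Matrix (Fin r) (Fin r) k) (hM : CuspBrick β M) :
    (Matrix.of fun (i : {i : Fin r // β i = 0}) (j : {j : Fin r // β j = 1}) =>
        M i.1 j.1).rank =
      min (Fintype.card {i : Fin r // β i = 0}) (Fintype.card {j : Fin r // β j = 1}) :=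
  cuspidal_brick_block_maximal_rank_general k r β M hM
end

section
/- Let k be an algebraically closed field, r ≥ 1, and β : {1,…,r} → {0,1} a block function. If M and M′ are bricks for the cuspidal matrix problem with trace M ≠ trace M′, then the only morphism from M to M′ is the zero matrix S = 0. -/
/-!
Write an admissible matrix as `[[A, B], [0, D]]` and a morphism as `[[P, 0], [Q, R]]`. For a brick,
`B` or `Bᵀ` is injective: otherwise `Q = z wᵀ` with `B z = 0`, `wᵀ B = 0` is a non-scalar
endomorphism. Transposing (which swaps the blocks) we may assume that `B` is injective for both
bricks; a change of basis in the first block then makes `B = [1; 0]`. In this form the morphism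
equations force `R = P₁₁`, `P₂₁ = 0`, determine `Q`, and say that `(P₂₂, P₁₂, P₁₁)` is a morphism
of a smaller problem of the same kind, between bricks with the same traces. This is Euclid's
algorithm on the block sizes; it stops when one block is empty, where a brick is a scalar matrix
`c • 1` and distinct traces give distinct scalars.
-/

open Matrix

theorem Module.Basis.sumExtend_inl {K V ι : Type*} [Field K] [AddCommGroup V] [Module K V]
    {v : ι → V} (hs : LinearIndependent K v) (i : ι) : sumExtend hs (Sum.inl i) = v i := by
  simp [sumExtend]; rfl

namespace Matrix

theorem trace_eq_trace_toBlocks₁₁_add {R m n : Type*} [Fintype m] [Fintype n]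
    [AddCommMonoid R] (N : Matrix (m ⊕ n) (m ⊕ n) R) :
    N.trace = N.toBlocks₁₁.trace + N.toBlocks₂₂.trace := by
  simp [Matrix.trace, Fintype.sum_sum_type, toBlocks₁₁, toBlocks₂₂]

variable {K m n : Type*} [Field K] [Fintype n]

theorem mulVec_injective_iff_rank_eq (A : Matrix m n K) :
    Function.Injective A.mulVec ↔ A.rank = Fintype.card n := by
  have := LinearMap.finrank_range_add_finrank_ker A.mulVecLin
  rw [Module.finrank_fintype_fun_eq_card] at this
  rw [← coe_mulVecLin, ← LinearMap.ker_eq_bot, ← Submodule.finrank_eq_zero, Matrix.rank]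
  omega

variable [Fintype m]

theorem card_le_of_mulVec_injective {A : Matrix m n K} (h : Function.Injective A.mulVec) :
    Fintype.card n ≤ Fintype.card m :=
  (A.mulVec_injective_iff_rank_eq.mp h) ▸ A.rank_le_card_height

theorem mulVec_injective_transpose_of_card_eq {A : Matrix m n K}
    (hc : Fintype.card m = Fintype.card n) (h : Function.Injective A.mulVec) :
    Function.Injective Aᵀ.mulVec := by
  rw [mulVec_injective_iff_rank_eq] at h ⊢
  rw [rank_transpose, h, hc]

theorem exists_mul_eq_fromRows_one_zero [DecidableEq m] [DecidableEq n] {δ : Type*} [Fintype δ]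
    [DecidableEq δ] {B : Matrix m n K} (hB : Function.Injective B.mulVec)
    (hcard : Fintype.card n + Fintype.card δ = Fintype.card m) :
    ∃ (e : Matrix (n ⊕ δ) m K) (f : Matrix m (n ⊕ δ) K),
      f * e = 1 ∧ e * f = 1 ∧ e * B = fromRows 1 0 := by
  have hli : LinearIndependent K B.col := mulVec_injective_iff.mp hB
  let b := Module.Basis.sumExtend hli
  have : Finite (n ⊕ Module.Basis.sumExtendIndex hli) := Module.Finite.finite_basis b
  have : Finite (Module.Basis.sumExtendIndex hli) :=
    .of_injective _ (Sum.inr_injective (α := n))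
  obtain ⟨σ⟩ : Nonempty (Module.Basis.sumExtendIndex hli ≃ δ) := by
    have := Module.finrank_eq_nat_card_basis b
    rw [Module.finrank_fintype_fun_eq_card, Nat.card_sum, Nat.card_eq_fintype_card] at this
    exact Finite.card_eq.mp (by rw [Nat.card_eq_fintype_card (α := δ)]; omega)
  let b' := b.reindex (Equiv.sumCongr (Equiv.refl n) σ)
  let L := b'.equivFun
  refine ⟨LinearMap.toMatrix' L.toLinearMap, LinearMap.toMatrix' L.symm.toLinearMap, ?_, ?_, ?_⟩
  · rw [← LinearMap.toMatrix'_comp]; simp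
  · rw [← LinearMap.toMatrix'_comp]; simp
  · ext x c
    have hc : B.col c = b' (Sum.inl c) := by simp [b', b, Module.Basis.sumExtend_inl]
    rw [← LinearMap.toMatrix'_toLin' B, ← LinearMap.toMatrix'_comp, LinearMap.toMatrix'_apply]
    simp only [LinearMap.coe_comp, Function.comp_apply, toLin'_apply, mulVec_single_one, hc,
      LinearEquiv.coe_coe, L, Module.Basis.equivFun_self]
    cases x <;> simp [one_apply, eq_comm]

end Matrix

/-- The admissible matrix `[[A, B], [0, D]]`: the block where `β = 0` is indexed by `α`, the block
where `β = 1` by `γ`. -/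
structure CuspBlocks (k α γ : Type*) where
  A : Matrix α α k
  B : Matrix α γ k
  D : Matrix γ γ k

namespace CuspBlocks

variable {k α γ : Type*}

/-- The transpose of `[[A, B], [0, D]]`, with the two blocks swapped so that it is again
block upper triangular. -/
def dual (X : CuspBlocks k α γ) : CuspBlocks k γ α := ⟨X.Dᵀ, X.Bᵀ, X.Aᵀ⟩

variable [Field k] [Fintype α] [Fintype γ]

/-- `(P, Q, R)` is the morphism `[[P, 0], [Q, R]]`; the three equations are the blocks of
`S * M = M' * S` at the positions allowed for an admissible matrix. -/
def IsHom (X Y : CuspBlocks k α γ) (P : Matrix α α k) (Q : Matrix γ α k) (R : Matrix γ γ k) :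
    Prop :=
  P * X.A = Y.A * P + Y.B * Q ∧ P * X.B = Y.B * R ∧ Q * X.B + R * X.D = Y.D * R

def IsBrick [DecidableEq α] [DecidableEq γ] (X : CuspBlocks k α γ) : Prop :=
  ∀ P Q R, IsHom X X P Q R → ∃ c : k, P = c • 1 ∧ Q = 0 ∧ R = c • 1

protected def trace (X : CuspBlocks k α γ) : k := X.A.trace + X.D.trace

@[simp] lemma trace_dual (X : CuspBlocks k α γ) : X.dual.trace = X.trace := by
  simp [CuspBlocks.trace, dual, add_comm]

lemma IsHom.dual {X Y : CuspBlocks k α γ} {P Q R} (h : IsHom X Y P Q R) :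
    IsHom Y.dual X.dual Rᵀ Qᵀ Pᵀ := by
  obtain ⟨h₀₀, h₀₁, h₁₁⟩ := h
  refine ⟨?_, ?_, ?_⟩ <;> simp only [CuspBlocks.dual, ← transpose_mul, ← transpose_add]
  · rw [← h₁₁, add_comm]
  · rw [h₀₁]
  · rw [h₀₀, add_comm]

lemma IsBrick.dual [DecidableEq α] [DecidableEq γ] {X : CuspBlocks k α γ} (hX : X.IsBrick) :
    X.dual.IsBrick := by
  intro P Q R h
  obtain ⟨c, hR, hQ, hP⟩ := hX _ _ _ h.dual
  exact ⟨c, by simpa using congrArg transpose hP, by simpa using congrArg transpose hQ,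
    by simpa using congrArg transpose hR⟩

section Conj

variable {α' : Type*} [Fintype α'] [DecidableEq α]

/-- Change of basis `e` (with left inverse `f`) in the first block. -/
def conj (X : CuspBlocks k α γ) (e : Matrix α' α k) (f : Matrix α α' k) : CuspBlocks k α' γ :=
  ⟨e * X.A * f, e * X.B, X.D⟩

lemma trace_conj (X : CuspBlocks k α γ) {e : Matrix α' α k} {f : Matrix α α' k}
    (hfe : f * e = 1) : (X.conj e f).trace = X.trace := by
  rw [CuspBlocks.trace, conj, trace_mul_comm, ← Matrix.mul_assoc, hfe, Matrix.one_mul]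
  rfl

lemma IsHom.conj {X Y : CuspBlocks k α γ} {P Q R} (h : IsHom X Y P Q R)
    {e e' : Matrix α' α k} {f f' : Matrix α α' k} (hfe : f * e = 1) (hfe' : f' * e' = 1) :
    IsHom (X.conj e f) (Y.conj e' f') (e' * P * f) (Q * f) R := by
  obtain ⟨h₀₀, h₀₁, h₁₁⟩ := h
  refine ⟨?_, ?_, ?_⟩ <;> simp only [CuspBlocks.conj]
  · calc e' * P * f * (e * X.A * f) = e' * (P * X.A) * f := by
          simp only [Matrix.mul_assoc, ← Matrix.mul_assoc f e, hfe, Matrix.one_mul]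
      _ = _ := by
          rw [h₀₀]
          simp only [Matrix.mul_add, Matrix.add_mul, Matrix.mul_assoc, ← Matrix.mul_assoc f' e',
            hfe', Matrix.one_mul]
  · calc e' * P * f * (e * X.B) = e' * (P * X.B) := by
          simp only [Matrix.mul_assoc, ← Matrix.mul_assoc f e, hfe, Matrix.one_mul]
      _ = _ := by rw [h₀₁, Matrix.mul_assoc]
  · rw [Matrix.mul_assoc, ← Matrix.mul_assoc f, hfe, Matrix.one_mul, h₁₁]

lemma IsBrick.conj [DecidableEq α'] [DecidableEq γ] {X : CuspBlocks k α γ} (hX : X.IsBrick)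
    {e : Matrix α' α k} {f : Matrix α α' k} (hfe : f * e = 1) (hef : e * f = 1) :
    (X.conj e f).IsBrick := by
  intro P Q R h
  have h' := h.conj hef hef
  have hX' : (X.conj e f).conj f e = X := by
    simp only [CuspBlocks.conj, ← Matrix.mul_assoc, hfe, Matrix.one_mul]
    simp only [Matrix.mul_assoc, hfe, Matrix.mul_one]
  rw [hX'] at h'
  obtain ⟨c, hP, hQ, hR⟩ := hX _ _ _ h'
  refine ⟨c, ?_, ?_, hR⟩
  · calc P = e * (f * P * e) * f := by
          simp only [← Matrix.mul_assoc, hef, Matrix.one_mul]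
          simp only [Matrix.mul_assoc, hef, Matrix.mul_one]
      _ = c • 1 := by rw [hP, Matrix.mul_smul, Matrix.mul_one, Matrix.smul_mul, hef]
  · calc Q = Q * e * f := by rw [Matrix.mul_assoc, hef, Matrix.mul_one]
      _ = 0 := by rw [hQ, Matrix.zero_mul]

end Conj

section Bricks

variable [DecidableEq α] [DecidableEq γ]

lemma IsBrick.exists_eq_smul_one [IsEmpty γ] {X : CuspBlocks k α γ} (hX : X.IsBrick) :
    ∃ c : k, X.A = c • 1 := by
  obtain ⟨c, hA, -, -⟩ := hX X.A 0 0
    ⟨by simp [Subsingleton.elim X.B 0], Subsingleton.elim _ _, Subsingleton.elim _ _⟩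
  exact ⟨c, hA⟩

lemma IsHom.eq_zero_of_isEmpty [IsEmpty γ] {X Y : CuspBlocks k α γ} (hX : X.IsBrick)
    (hY : Y.IsBrick) (htr : X.trace ≠ Y.trace) {P Q R} (h : IsHom X Y P Q R) :
    P = 0 ∧ Q = 0 ∧ R = 0 := by
  obtain ⟨c, hc⟩ := hX.exists_eq_smul_one
  obtain ⟨c', hc'⟩ := hY.exists_eq_smul_one
  have hcc' : c ≠ c' := by
    rintro rfl
    exact htr (by simp [CuspBlocks.trace, hc, hc', Subsingleton.elim X.D Y.D])
  have hP : (c - c') • P = 0 := by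
    have := h.1
    rw [hc, hc', Subsingleton.elim Y.B 0, Matrix.zero_mul, add_zero, Matrix.mul_smul,
      Matrix.smul_mul, Matrix.mul_one, Matrix.one_mul] at this
    rw [sub_smul, this, sub_self]
  exact ⟨(smul_eq_zero.mp hP).resolve_left (sub_ne_zero.mpr hcc'), Subsingleton.elim _ _,
    Subsingleton.elim _ _⟩

lemma IsBrick.injective_or_injective_transpose {X : CuspBlocks k α γ} (hX : X.IsBrick) :
    Function.Injective X.B.mulVec ∨ Function.Injective X.Bᵀ.mulVec := by
  simp only [← Matrix.coe_mulVecLin, ← LinearMap.ker_eq_bot, ker_mulVecLin_eq_bot_iff]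
  by_contra! ⟨⟨z, hz, hz0⟩, ⟨w, hw, hw0⟩⟩
  rw [mulVecLin_apply] at hz hw
  have hQ : IsHom X X 0 (vecMulVec z w) 0 := by
    refine ⟨?_, by simp, ?_⟩
    · simp [mul_vecMulVec, hz]
    · simp [vecMulVec_mul, ← mulVec_transpose, hw]
  obtain ⟨c, -, hc, -⟩ := hX _ _ _ hQ
  obtain ⟨i, hi⟩ := Function.ne_iff.mp hz0
  obtain ⟨j, hj⟩ := Function.ne_iff.mp hw0
  exact mul_ne_zero hi hj (by simpa [vecMulVec_apply] using congrFun₂ hc i j)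

/-- When one of `X.B`, `Y.B` is injective and the other one surjective, the two blocks have the
same size and both are bijective. -/
lemma IsBrick.both_injective_or_both_injective_transpose {X Y : CuspBlocks k α γ} (hX : X.IsBrick)
    (hY : Y.IsBrick) :
    (Function.Injective X.B.mulVec ∧ Function.Injective Y.B.mulVec) ∨
      (Function.Injective X.Bᵀ.mulVec ∧ Function.Injective Y.Bᵀ.mulVec) := by
  rcases hX.injective_or_injective_transpose with hXB | hXB <;>
    rcases hY.injective_or_injective_transpose with hYB | hYB
  · exact .inl ⟨hXB, hYB⟩
  · have hc := (card_le_of_mulVec_injective hXB).antisymm (card_le_of_mulVec_injective hYB)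
    exact .inl ⟨hXB, by simpa using mulVec_injective_transpose_of_card_eq hc hYB⟩
  · have hc := (card_le_of_mulVec_injective hYB).antisymm (card_le_of_mulVec_injective hXB)
    exact .inl ⟨by simpa using mulVec_injective_transpose_of_card_eq hc hXB, hYB⟩
  · exact .inr ⟨hXB, hYB⟩

end Bricks

section Reduce

variable {δ : Type*} [Fintype δ]

/-- The smaller problem attached to an object whose `B` is `fromRows 1 0`: the second block of
`α = γ ⊕ δ` becomes the new first block. -/
def reduce (X : CuspBlocks k (γ ⊕ δ) γ) : CuspBlocks k δ γ :=
  ⟨X.A.toBlocks₂₂, X.A.toBlocks₂₁, X.A.toBlocks₁₁ + X.D⟩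

lemma trace_reduce (X : CuspBlocks k (γ ⊕ δ) γ) : X.reduce.trace = X.trace := by
  rw [CuspBlocks.trace, CuspBlocks.trace, reduce, trace_add, X.A.trace_eq_trace_toBlocks₁₁_add]
  abel

variable [DecidableEq γ]

lemma isHom_fromBlocks_iff {X Y : CuspBlocks k (γ ⊕ δ) γ} (hX : X.B = fromRows 1 0)
    (hY : Y.B = fromRows 1 0) {P₁₁ P₁₂ P₂₁ P₂₂ Q₁ Q₂ R} :
    IsHom X Y (fromBlocks P₁₁ P₁₂ P₂₁ P₂₂) (fromCols Q₁ Q₂) R ↔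
      P₂₁ = 0 ∧ R = P₁₁ ∧ Q₁ = Y.D * R - R * X.D ∧
      Q₂ = P₁₁ * X.A.toBlocks₁₂ + P₁₂ * X.A.toBlocks₂₂ - Y.A.toBlocks₁₁ * P₁₂
        - Y.A.toBlocks₁₂ * P₂₂ ∧
      IsHom X.reduce Y.reduce P₂₂ P₁₂ P₁₁ := by
  obtain ⟨A, B, D⟩ := X
  obtain ⟨A', B', D'⟩ := Y
  obtain ⟨a₁₁, a₁₂, a₂₁, a₂₂, rfl⟩ : ∃ a₁₁ a₁₂ a₂₁ a₂₂, A = fromBlocks a₁₁ a₁₂ a₂₁ a₂₂ :=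
    ⟨_, _, _, _, (fromBlocks_toBlocks A).symm⟩
  obtain ⟨b₁₁, b₁₂, b₂₁, b₂₂, rfl⟩ : ∃ b₁₁ b₁₂ b₂₁ b₂₂, A' = fromBlocks b₁₁ b₁₂ b₂₁ b₂₂ :=
    ⟨_, _, _, _, (fromBlocks_toBlocks A').symm⟩
  simp only at hX hY
  subst hX hY
  simp only [IsHom, fromRows_mul_fromCols]
  simp only [reduce, fromBlocks_multiply, fromBlocks_mul_fromRows, fromRows_mul,
    fromCols_mul_fromRows, fromBlocks_add, fromBlocks_inj, fromRows_ext_iff, toBlocks_fromBlocks₁₁,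
    toBlocks_fromBlocks₁₂, toBlocks_fromBlocks₂₁, toBlocks_fromBlocks₂₂, Matrix.mul_one,
    Matrix.mul_zero, Matrix.one_mul, Matrix.zero_mul, add_zero]
  constructor
  · rintro ⟨⟨h₁₁, h₁₂, h₂₁, h₂₂⟩, ⟨rfl, rfl⟩, hQ⟩
    simp only [Matrix.zero_mul, Matrix.mul_zero, zero_add, add_zero] at h₁₁ h₂₁ h₂₂
    refine ⟨rfl, rfl, eq_sub_of_add_eq hQ, by rw [h₁₂]; abel, by rw [h₂₂, add_comm], h₂₁, ?_⟩
    calc P₁₂ * a₂₁ + P₁₁ * (a₁₁ + D) = (P₁₁ * a₁₁ + P₁₂ * a₂₁) + P₁₁ * D := by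
          rw [Matrix.mul_add]; abel
      _ = b₁₁ * P₁₁ + (Q₁ + P₁₁ * D) := by rw [h₁₁, add_assoc]
      _ = (b₁₁ + D') * P₁₁ := by rw [hQ, Matrix.add_mul]
  · rintro ⟨rfl, rfl, rfl, rfl, h₀₀, h₀₁, h₁₁⟩
    refine ⟨⟨?_, by abel, by simpa using h₀₁, by simp [h₀₀, add_comm]⟩, ⟨rfl, rfl⟩,
      sub_add_cancel _ _⟩
    calc R * a₁₁ + P₁₂ * a₂₁ = P₁₂ * a₂₁ + R * (a₁₁ + D) - R * D := by
          rw [Matrix.mul_add]; abel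
      _ = b₁₁ * R + b₁₂ * (0 : Matrix δ γ k) + (D' * R - R * D) := by
          rw [h₁₁, Matrix.add_mul, Matrix.mul_zero]; abel

lemma IsHom.eq_zero_of_reduce {X Y : CuspBlocks k (γ ⊕ δ) γ} (hX : X.B = fromRows 1 0)
    (hY : Y.B = fromRows 1 0) {P Q R} (h : IsHom X Y P Q R)
    (hred : ∀ {p q r}, IsHom X.reduce Y.reduce p q r → p = 0 ∧ q = 0 ∧ r = 0) :
    P = 0 ∧ Q = 0 ∧ R = 0 := by
  rw [← fromBlocks_toBlocks P, ← fromCols_toCols Q, isHom_fromBlocks_iff hX hY] at h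
  obtain ⟨hP₂₁, rfl, hQ₁, hQ₂, hr⟩ := h
  obtain ⟨hP₂₂, hP₁₂, hP₁₁⟩ := hred hr
  refine ⟨?_, ?_, hP₁₁⟩
  · rw [← fromBlocks_toBlocks P, hP₁₁, hP₁₂, hP₂₁, hP₂₂, fromBlocks_zero]
  · rw [← fromCols_toCols Q, hQ₁, hQ₂, hP₁₁, hP₁₂, hP₂₂]
    simp

lemma IsBrick.reduce [DecidableEq δ] {X : CuspBlocks k (γ ⊕ δ) γ} (hX : X.B = fromRows 1 0)
    (h : X.IsBrick) : X.reduce.IsBrick := by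
  intro p q r hr
  obtain ⟨c, hP, -, hR⟩ := h _ _ _ ((isHom_fromBlocks_iff hX hX).mpr ⟨rfl, rfl, rfl, rfl, hr⟩)
  rw [← fromBlocks_one, fromBlocks_smul, fromBlocks_inj, smul_zero] at hP
  exact ⟨c, hP.2.2.2, hP.2.1, hR⟩

end Reduce

lemma IsHom.eq_zero_of_injective [DecidableEq α] [DecidableEq γ] {X Y : CuspBlocks k α γ}
    (hX : X.IsBrick) (hY : Y.IsBrick) (htr : X.trace ≠ Y.trace)
    (hXB : Function.Injective X.B.mulVec) (hYB : Function.Injective Y.B.mulVec)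
    (ih : ∀ X' Y' : CuspBlocks k (Fin (Fintype.card α - Fintype.card γ)) γ, X'.IsBrick →
      Y'.IsBrick → X'.trace ≠ Y'.trace → ∀ {P Q R}, IsHom X' Y' P Q R → P = 0 ∧ Q = 0 ∧ R = 0)
    {P Q R} (h : IsHom X Y P Q R) : P = 0 ∧ Q = 0 ∧ R = 0 := by
  have hcard : Fintype.card γ + Fintype.card (Fin (Fintype.card α - Fintype.card γ)) =
      Fintype.card α := by
    have := card_le_of_mulVec_injective hXB
    simp only [Fintype.card_fin]
    omega
  obtain ⟨e, f, hfe, hef, heB⟩ := exists_mul_eq_fromRows_one_zero hXB hcard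
  obtain ⟨e', f', hfe', hef', heB'⟩ := exists_mul_eq_fromRows_one_zero hYB hcard
  obtain ⟨hP, hQ, hR⟩ := (h.conj hfe hfe').eq_zero_of_reduce heB heB' fun hr =>
    ih _ _ ((hX.conj hfe hef).reduce heB) ((hY.conj hfe' hef').reduce heB')
      (by rwa [trace_reduce, trace_reduce, trace_conj _ hfe, trace_conj _ hfe']) hr
  refine ⟨?_, ?_, hR⟩
  · calc P = f' * (e' * P * f) * e := by
          simp only [← Matrix.mul_assoc, hfe', Matrix.one_mul]
          simp only [Matrix.mul_assoc, hfe, Matrix.mul_one]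
      _ = 0 := by rw [hP, Matrix.mul_zero, Matrix.zero_mul]
  · calc Q = Q * f * e := by rw [Matrix.mul_assoc, hfe, Matrix.mul_one]
      _ = 0 := by rw [hQ, Matrix.zero_mul]

end CuspBlocks

theorem CuspBlocks.IsHom.eq_zero_of_trace_ne {k : Type*} [Field k] {α γ : Type} [Fintype α]
    [Fintype γ] [DecidableEq α] [DecidableEq γ] {X Y : CuspBlocks k α γ} (hX : X.IsBrick)
    (hY : Y.IsBrick) (htr : X.trace ≠ Y.trace) {P Q R} (h : IsHom X Y P Q R) :
    P = 0 ∧ Q = 0 ∧ R = 0 := by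
  induction hn : Fintype.card α + Fintype.card γ using Nat.strong_induction_on
    generalizing α γ with
  | _ n ih =>
    rcases isEmpty_or_nonempty γ with hγ | hγ
    · exact h.eq_zero_of_isEmpty hX hY htr
    rcases isEmpty_or_nonempty α with hα | hα
    · obtain ⟨hR, hQ, hP⟩ :=
        h.dual.eq_zero_of_isEmpty hY.dual hX.dual (by simpa using htr.symm)
      exact ⟨by simpa using hP, by simpa using hQ, by simpa using hR⟩
    rcases hX.both_injective_or_both_injective_transpose hY with ⟨hXB, hYB⟩ | ⟨hXB, hYB⟩
    · refine h.eq_zero_of_injective hX hY htr hXB hYB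
        fun X' Y' hX' hY' htr' _ _ _ h' => ih _ ?_ hX' hY' htr' h' rfl
      have := card_le_of_mulVec_injective hXB
      have := Fintype.card_pos (α := γ)
      simp only [Fintype.card_fin]
      omega
    · have hsmaller :
          Fintype.card (Fin (Fintype.card γ - Fintype.card α)) + Fintype.card α < n := by
        have := card_le_of_mulVec_injective hXB
        have := Fintype.card_pos (α := α)
        simp only [Fintype.card_fin]
        omega
      obtain ⟨hR, hQ, hP⟩ :=
        h.dual.eq_zero_of_injective hY.dual hX.dual (by simpa using htr.symm) hYB hXB
          fun X' Y' hX' hY' htr' _ _ _ h' => ih _ hsmaller hX' hY' htr' h' rfl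
      exact ⟨by simpa using hP, by simpa using hQ, by simpa using hR⟩

section FinBlocks

variable {k : Type*} [Field k] {r : ℕ} (β : Fin r → Fin 2)

abbrev blockEquiv : {i // β i = 0} ⊕ {i // ¬β i = 0} ≃ Fin r := Equiv.sumCompl _

/-- The block below the diagonal is dropped: it vanishes for admissible `M`, and `CuspHom` does not
depend on it anyway. -/
def CuspBlocks.ofMatrix (M : Matrix (Fin r) (Fin r) k) :
    CuspBlocks k {i // β i = 0} {i // ¬β i = 0} :=
  ⟨(M.submatrix (blockEquiv β) (blockEquiv β)).toBlocks₁₁,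
    (M.submatrix (blockEquiv β) (blockEquiv β)).toBlocks₁₂,
    (M.submatrix (blockEquiv β) (blockEquiv β)).toBlocks₂₂⟩

lemma CuspBlocks.trace_ofMatrix (M : Matrix (Fin r) (Fin r) k) :
    (CuspBlocks.ofMatrix β M).trace = M.trace := by
  rw [CuspBlocks.trace, CuspBlocks.ofMatrix, ← trace_eq_trace_toBlocks₁₁_add]
  simp only [Matrix.trace, diag, submatrix_apply]
  exact (blockEquiv β).sum_comp fun i => M i i

lemma forall_imp_eq_zero_iff_toBlocks (p : Fin 2 → Fin 2 → Prop) (X : Matrix (Fin r) (Fin r) k) :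
    (∀ i j, p (β i) (β j) → X i j = 0) ↔
      (p 0 0 → (X.submatrix (blockEquiv β) (blockEquiv β)).toBlocks₁₁ = 0) ∧
      (p 0 1 → (X.submatrix (blockEquiv β) (blockEquiv β)).toBlocks₁₂ = 0) ∧
      (p 1 0 → (X.submatrix (blockEquiv β) (blockEquiv β)).toBlocks₂₁ = 0) ∧
      (p 1 1 → (X.submatrix (blockEquiv β) (blockEquiv β)).toBlocks₂₂ = 0) := by
  have hβ₀ : ∀ i : {i // β i = 0}, β i = 0 := fun i => i.2
  have hβ₁ : ∀ i : {i // ¬β i = 0}, β i = 1 := fun i => by omega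
  simp only [← (blockEquiv β).forall_congr_right, Sum.forall, Equiv.sumCompl_apply_inl,
    Equiv.sumCompl_apply_inr, ← Matrix.ext_iff, toBlocks₁₁, toBlocks₁₂, toBlocks₂₁, toBlocks₂₂,
    of_apply, submatrix_apply, Matrix.zero_apply, hβ₀, hβ₁, forall_and, imp_forall_iff, and_assoc]
  exact and_congr_right' and_left_comm

lemma cuspHom_iff_isHom {M M' S : Matrix (Fin r) (Fin r) k} :
    CuspHom β M M' S ↔ (S.submatrix (blockEquiv β) (blockEquiv β)).toBlocks₁₂ = 0 ∧
      (CuspBlocks.ofMatrix β M).IsHom (CuspBlocks.ofMatrix β M')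
        (S.submatrix (blockEquiv β) (blockEquiv β)).toBlocks₁₁
        (S.submatrix (blockEquiv β) (blockEquiv β)).toBlocks₂₁
        (S.submatrix (blockEquiv β) (blockEquiv β)).toBlocks₂₂ := by
  have hsub : (S * M - M' * S).submatrix (blockEquiv β) (blockEquiv β) =
      S.submatrix (blockEquiv β) (blockEquiv β) * M.submatrix (blockEquiv β) (blockEquiv β) -
        M'.submatrix (blockEquiv β) (blockEquiv β) * S.submatrix (blockEquiv β) (blockEquiv β) := by
    rw [submatrix_mul_equiv, submatrix_mul_equiv]
    rfl
  rw [CuspHom, forall_imp_eq_zero_iff_toBlocks, forall_imp_eq_zero_iff_toBlocks, hsub]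
  simp +decide only [true_implies, false_implies, true_and, and_true, CuspBlocks.IsHom,
    CuspBlocks.ofMatrix]
  refine and_congr_right fun h₁₂ => ?_
  generalize S.submatrix (blockEquiv β) (blockEquiv β) = T at h₁₂ ⊢
  generalize M.submatrix (blockEquiv β) (blockEquiv β) = N
  generalize M'.submatrix (blockEquiv β) (blockEquiv β) = N'
  rw [← fromBlocks_toBlocks T, ← fromBlocks_toBlocks N, ← fromBlocks_toBlocks N', h₁₂]
  simp only [fromBlocks_multiply, sub_eq_add_neg, fromBlocks_neg, fromBlocks_add,
    toBlocks_fromBlocks₁₁, toBlocks_fromBlocks₁₂, toBlocks_fromBlocks₂₁, toBlocks_fromBlocks₂₂,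
    Matrix.zero_mul, Matrix.mul_zero, add_zero, zero_add, add_neg_eq_zero]

lemma CuspBrick.isBrick {M : Matrix (Fin r) (Fin r) k} (hM : CuspBrick β M) :
    (CuspBlocks.ofMatrix β M).IsBrick := by
  intro P Q R h
  set S := (fromBlocks P 0 Q R).submatrix (blockEquiv β).symm (blockEquiv β).symm
  have hS : S.submatrix (blockEquiv β) (blockEquiv β) = fromBlocks P 0 Q R := by
    simp [S, submatrix_submatrix]
  obtain ⟨c, hc⟩ := hM.2 S ((cuspHom_iff_isHom β).mpr (by
    simpa only [hS, toBlocks_fromBlocks₁₁, toBlocks_fromBlocks₁₂, toBlocks_fromBlocks₂₁,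
      toBlocks_fromBlocks₂₂, true_and] using h))
  rw [hc, ← fromBlocks_toBlocks ((c • 1 : Matrix (Fin r) (Fin r) k).submatrix _ _),
    fromBlocks_inj] at hS
  obtain ⟨hP, -, hQ, hR⟩ := hS
  refine ⟨c, ?_, ?_, ?_⟩
  · rw [← hP]; ext i j; simp [toBlocks₁₁, one_apply, Subtype.ext_iff]
  · rw [← hQ]; ext i j
    have hij : (i : Fin r) ≠ j := fun h => i.2 (h ▸ j.2)
    simp [toBlocks₂₁, one_apply_ne hij]
  · rw [← hR]; ext i j; simp [toBlocks₂₂, one_apply, Subtype.ext_iff]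

end FinBlocks

theorem cuspidal_bricks_no_homs_of_trace_ne_general (k : Type*) [Field k]
    (r : ℕ) (β : Fin r → Fin 2)
    (M M' : Matrix (Fin r) (Fin r) k) (hM : CuspBrick β M) (hM' : CuspBrick β M')
    (htr : M.trace ≠ M'.trace)
    (S : Matrix (Fin r) (Fin r) k) (hS : CuspHom β M M' S) :
    S = 0 := by
  obtain ⟨hS₁₂, hS⟩ := (cuspHom_iff_isHom β).mp hS
  obtain ⟨hS₁₁, hS₂₁, hS₂₂⟩ := hS.eq_zero_of_trace_ne hM.isBrick hM'.isBrick
    (by rwa [CuspBlocks.trace_ofMatrix, CuspBlocks.trace_ofMatrix])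
  have hS₀ : S.submatrix (blockEquiv β) (blockEquiv β) = 0 := by
    rw [← fromBlocks_toBlocks (S.submatrix _ _), hS₁₁, hS₁₂, hS₂₁, hS₂₂, fromBlocks_zero]
  ext i j
  simpa using congrFun₂ hS₀ ((blockEquiv β).symm i) ((blockEquiv β).symm j)

/-- Between bricks for the cuspidal matrix problem with distinct traces there are
no nonzero morphisms (Proposition 11.2 of the paper). -/
theorem cuspidal_bricks_no_homs_of_trace_ne (k : Type*) [Field k] [IsAlgClosed k]
    (r : ℕ) (hr : 1 ≤ r) (β : Fin r → Fin 2)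
    (M M' : Matrix (Fin r) (Fin r) k) (hM : CuspBrick β M) (hM' : CuspBrick β M')
    (htr : M.trace ≠ M'.trace)
    (S : Matrix (Fin r) (Fin r) k) (hS : CuspHom β M M' S) :
    S = 0 :=
  cuspidal_bricks_no_homs_of_trace_ne_general k r β M M' hM hM' htr S hS
end

section
/- Let k be an algebraically closed field, r ≥ 1, and β : {1,…,r} → {0,1} a block function. If M is a brick for the cuspidal matrix problem and c ∈ k, then M + c·I is again a brick, and M + c·I is equivalent to M if and only if r·c = 0 in k; in particular, if k has characteristic 0 then M + c·I is equivalent to M only for c = 0. (This is the matrix formulation of Theorem 1.2(ii) for the cuspidal cubic: the Jacobian Pic⁰(E) ≅ k acts transitively on the simple vector bundles of fixed rank r and degree, with trivial stabilizer.) -/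
/-- Equivalence of admissible matrices for the cuspidal matrix problem. -/
def CuspEquiv {k : Type*} [Field k] {r : ℕ} (β : Fin r → Fin 2)
    (M M' : Matrix (Fin r) (Fin r) k) : Prop :=
  ∃ S T : Matrix (Fin r) (Fin r) k,
    CuspHom β M M' S ∧ CuspHom β M' M T ∧ S * T = 1 ∧ T * S = 1


/-!
Write an admissible matrix as `M = [[A, B], [0, D]]` over the blocks `V₀ ⊕ V₁` (of dimensions
`s₀, s₁`); morphisms are then block lower triangular and the defect `S M - M' S` sits in the block
below the diagonal. Hence the trace is invariant under equivalence, and `tr (M + c • 1) = tr M`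
forces `r c = 0`.

Conversely, in a brick `B` is injective or surjective, since otherwise a rank one map
`V₀ → coker B → ker B` gives a nonscalar endomorphism. Splitting off `range B`, resp. `ker B`,
turns the search for an isomorphism from the shift `(A + l₀, D + l₁, B)` to `(A, D, B)` into the
same search for a smaller brick, with dimension vector `(s₀ - s₁, s₁)` and shift `(l₀, l₀ + l₁)`,
resp. `(s₀, s₁ - s₀)` and `(l₀ + l₁, l₁)`. This Euclidean algorithm keeps `s₀ l₀ + s₁ l₁` fixed
and stops when a block vanishes; the brick then has dimension at most one, so that quantity being
zero means the shift acts trivially. Hence a brick is isomorphic to its shift by `(l₀, l₁)` as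
soon as `s₀ l₀ + s₁ l₁ = 0`, which for `l₀ = l₁ = c` is `r c = 0`.
-/

open Module LinearMap

section LinearAlgebra

variable {k V K E : Type*} [Field k] [AddCommGroup V] [Module k V] [AddCommGroup K] [Module k K]
  [AddCommGroup E] [Module k E]

theorem apply_mk_eq_add (f : V × K →ₗ[k] E) (a : V) (b : K) : f (a, b) = f (a, 0) + f (0, b) := by
  rw [← map_add, Prod.mk_add_mk, add_zero, zero_add]

theorem finrank_le_one_of_forall_eq_smul_id [FiniteDimensional k V]
    (h : ∀ X : V →ₗ[k] V, ∃ c : k, X = c • LinearMap.id) : finrank k V ≤ 1 := by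
  rw [finrank_le_one_iff]
  rcases subsingleton_or_nontrivial V with hV | hV
  · exact ⟨0, fun w => ⟨0, Subsingleton.elim _ _⟩⟩
  obtain ⟨v, hv⟩ := exists_ne (0 : V)
  obtain ⟨φ, hφ⟩ := Projective.exists_dual_eq_one k hv
  refine ⟨v, fun w => ?_⟩
  obtain ⟨c, hc⟩ := h (φ.smulRight w)
  exact ⟨c, by simpa [hφ] using (LinearMap.congr_fun hc v).symm⟩

theorem smul_eq_zero_of_finrank_le_one [FiniteDimensional k V] {l : k}
    (hV : finrank k V ≤ 1) (hl : finrank k V • l = 0) (v : V) : l • v = 0 := by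
  interval_cases h : finrank k V
  · have := finrank_zero_iff.mp h
    exact Subsingleton.elim _ _
  · rw [one_nsmul] at hl
    rw [hl, zero_smul]

end LinearAlgebra

/-- The admissible matrix `M = [[A, B], [0, D]]`, cut into its blocks over `V₀ ⊕ V₁`. -/
structure CuspTriple (k V₀ V₁ : Type*) [Field k] [AddCommGroup V₀] [Module k V₀]
    [AddCommGroup V₁] [Module k V₁] where
  A : V₀ →ₗ[k] V₀
  B : V₁ →ₗ[k] V₀
  D : V₁ →ₗ[k] V₁

namespace CuspTriple

section General

variable {k V₀ V₁ V₀' V₁' V₀'' V₁'' : Type*} [Field k]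
  [AddCommGroup V₀] [Module k V₀] [AddCommGroup V₁] [Module k V₁]
  [AddCommGroup V₀'] [Module k V₀'] [AddCommGroup V₁'] [Module k V₁']
  [AddCommGroup V₀''] [Module k V₀''] [AddCommGroup V₁''] [Module k V₁'']

/-- The blockwise form of a morphism `S = [[X, 0], [Z, W]]`. -/
structure IsHom (T : CuspTriple k V₀ V₁) (U : CuspTriple k V₀' V₁') (X : V₀ →ₗ[k] V₀')
    (W : V₁ →ₗ[k] V₁') (Z : V₀ →ₗ[k] V₁') : Prop where
  comm_B : ∀ v, X (T.B v) = U.B (W v)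
  comm_A : ∀ v, X (T.A v) - U.A (X v) = U.B (Z v)
  comm_D : ∀ v, Z (T.B v) + W (T.D v) - U.D (W v) = 0

def IsIso (T : CuspTriple k V₀ V₁) (U : CuspTriple k V₀' V₁') : Prop :=
  ∃ (X : V₀ ≃ₗ[k] V₀') (W : V₁ ≃ₗ[k] V₁') (Z : V₀ →ₗ[k] V₁'), IsHom T U X W Z

def IsBrick (T : CuspTriple k V₀ V₁) : Prop :=
  ∀ X W Z, IsHom T T X W Z → ∃ c : k, X = c • LinearMap.id ∧ W = c • LinearMap.id ∧ Z = 0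

def shift (T : CuspTriple k V₀ V₁) (l₀ l₁ : k) : CuspTriple k V₀ V₁ :=
  ⟨T.A + l₀ • LinearMap.id, T.B, T.D + l₁ • LinearMap.id⟩

def map (T : CuspTriple k V₀ V₁) (e₀ : V₀ ≃ₗ[k] V₀') (e₁ : V₁ ≃ₗ[k] V₁') :
    CuspTriple k V₀' V₁' :=
  ⟨e₀.conj T.A, e₀ ∘ₗ T.B ∘ₗ e₁.symm, e₁.conj T.D⟩

variable {T : CuspTriple k V₀ V₁} {U : CuspTriple k V₀' V₁'} {R : CuspTriple k V₀'' V₁''}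

theorem IsHom.comp {X W Z X' W' Z'} (h : IsHom T U X W Z) (h' : IsHom U R X' W' Z') :
    IsHom T R (X' ∘ₗ X) (W' ∘ₗ W) (Z' ∘ₗ X + W' ∘ₗ Z) where
  comm_B v := by simp only [comp_apply, h.comm_B, h'.comm_B]
  comm_A v := by
    have h₁ := congr(X' $(h.comm_A v))
    simp only [map_sub, h'.comm_B] at h₁
    simp only [comp_apply, LinearMap.add_apply, map_add]
    linear_combination (norm := module) h₁ + h'.comm_A (X v)
  comm_D v := by
    have h₁ := congr(W' $(h.comm_D v))
    simp only [map_sub, map_add, map_zero] at h₁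
    simp only [comp_apply, LinearMap.add_apply, h.comm_B]
    linear_combination (norm := module) h₁ + h'.comm_D (W v)

theorem IsHom.shift {X W Z} (h : IsHom T U X W Z) (l₀ l₁ : k) :
    IsHom (T.shift l₀ l₁) (U.shift l₀ l₁) X W Z where
  comm_B := h.comm_B
  comm_A v := by
    simp only [CuspTriple.shift, LinearMap.add_apply, LinearMap.smul_apply, id_apply, map_add,
      map_smul]
    linear_combination (norm := module) h.comm_A v
  comm_D v := by
    simp only [CuspTriple.shift, LinearMap.add_apply, LinearMap.smul_apply, id_apply, map_add,
      map_smul]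
    linear_combination (norm := module) h.comm_D v

theorem isHom_map (T : CuspTriple k V₀ V₁) (e₀ : V₀ ≃ₗ[k] V₀') (e₁ : V₁ ≃ₗ[k] V₁') :
    IsHom T (T.map e₀ e₁) e₀ e₁ 0 where
  comm_B v := by simp [CuspTriple.map]
  comm_A v := by simp [CuspTriple.map, LinearEquiv.conj_apply]
  comm_D v := by simp [CuspTriple.map, LinearEquiv.conj_apply]

theorem isHom_map_symm (T : CuspTriple k V₀ V₁) (e₀ : V₀ ≃ₗ[k] V₀') (e₁ : V₁ ≃ₗ[k] V₁') :
    IsHom (T.map e₀ e₁) T e₀.symm e₁.symm 0 where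
  comm_B v := by simp [CuspTriple.map]
  comm_A v := by simp [CuspTriple.map, LinearEquiv.conj_apply]
  comm_D v := by simp [CuspTriple.map, LinearEquiv.conj_apply]

theorem IsIso.trans (h : IsIso T U) (h' : IsIso U R) : IsIso T R := by
  obtain ⟨X, W, Z, h⟩ := h
  obtain ⟨X', W', Z', h'⟩ := h'
  exact ⟨X.trans X', W.trans W', _, h.comp h'⟩

theorem IsIso.of_map_shift {e₀ : V₀ ≃ₗ[k] V₀'} {e₁ : V₁ ≃ₗ[k] V₁'} {l₀ l₁ : k}
    (h : IsIso ((T.map e₀ e₁).shift l₀ l₁) (T.map e₀ e₁)) : IsIso (T.shift l₀ l₁) T :=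
  IsIso.trans (IsIso.trans ⟨e₀, e₁, 0, (isHom_map T e₀ e₁).shift l₀ l₁⟩ h)
    ⟨e₀.symm, e₁.symm, 0, isHom_map_symm T e₀ e₁⟩

theorem IsBrick.map (hT : T.IsBrick) (e₀ : V₀ ≃ₗ[k] V₀') (e₁ : V₁ ≃ₗ[k] V₁') :
    (T.map e₀ e₁).IsBrick := by
  intro X W Z h
  obtain ⟨c, hX, hW, hZ⟩ :=
    hT _ _ _ (((isHom_map T e₀ e₁).comp h).comp (isHom_map_symm T e₀ e₁))
  refine ⟨c, ?_, ?_, ?_⟩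
  · ext v
    simpa using congr(e₀ $(LinearMap.congr_fun hX (e₀.symm v)))
  · ext v
    simpa using congr(e₁ $(LinearMap.congr_fun hW (e₁.symm v)))
  · ext v
    simpa using congr(e₁ $(LinearMap.congr_fun hZ (e₀.symm v)))

theorem isIso_shift_self (T : CuspTriple k V₀ V₁) {l₀ l₁ : k} (h₀ : ∀ v : V₀, l₀ • v = 0)
    (h₁ : ∀ v : V₁, l₁ • v = 0) : IsIso (T.shift l₀ l₁) T :=
  ⟨LinearEquiv.refl k V₀, LinearEquiv.refl k V₁, 0,
    ⟨fun v => rfl, fun v => by simp [shift, h₀], fun v => by simp [shift, h₁]⟩⟩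

theorem IsBrick.finrank_le_one_of_subsingleton_right [FiniteDimensional k V₀] [Subsingleton V₁]
    (hT : T.IsBrick) : finrank k V₀ ≤ 1 := by
  have hcomm (X : V₀ →ₗ[k] V₀) (hX : ∀ v, X (T.A v) = T.A (X v)) :
      ∃ c : k, X = c • LinearMap.id :=
    (hT X 0 0 ⟨fun v => by simp [Subsingleton.elim v 0], fun v => by simp [hX],
      fun v => Subsingleton.elim _ _⟩).imp fun _ h => h.1
  obtain ⟨a, ha⟩ := hcomm T.A fun _ => rfl
  exact finrank_le_one_of_forall_eq_smul_id fun X => hcomm X fun v => by simp [ha]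

theorem IsBrick.finrank_le_one_of_subsingleton_left [FiniteDimensional k V₁] [Subsingleton V₀]
    (hT : T.IsBrick) : finrank k V₁ ≤ 1 := by
  have hcomm (W : V₁ →ₗ[k] V₁) (hW : ∀ v, W (T.D v) = T.D (W v)) :
      ∃ c : k, W = c • LinearMap.id :=
    (hT 0 W 0 ⟨fun v => Subsingleton.elim _ _, fun v => Subsingleton.elim _ _,
      fun v => by simp [hW]⟩).imp fun _ h => h.2.1
  obtain ⟨d, hd⟩ := hcomm T.D fun _ => rfl
  exact finrank_le_one_of_forall_eq_smul_id fun W => hcomm W fun v => by simp [hd]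

theorem IsBrick.surjective_or_injective (hT : T.IsBrick) :
    Function.Surjective T.B ∨ Function.Injective T.B := by
  by_contra! h
  obtain ⟨hsurj, hinj⟩ := h
  obtain ⟨u, hu, hu0⟩ := Submodule.exists_mem_ne_zero_of_ne_bot (mt ker_eq_bot.mp hinj)
  obtain ⟨φ, hφ, hφB⟩ := Submodule.exists_dual_map_eq_bot_of_lt_top (R := k)
    (lt_top_iff_ne_top.mpr (mt range_eq_top.mp hsurj)) inferInstance
  have hφB' (v : V₁) : φ (T.B v) = 0 := by
    have := Submodule.mem_map_of_mem (f := φ) (mem_range_self T.B v)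
    rwa [hφB, Submodule.mem_bot] at this
  obtain ⟨c, -, -, hZ⟩ := hT 0 0 (φ.smulRight u)
    ⟨fun v => by simp, fun v => by simp [mem_ker.mp hu], fun v => by simp [hφB']⟩
  apply hφ
  ext v
  simpa [hu0] using LinearMap.congr_fun hZ v

theorem exists_map_B_eq_fst (T : CuspTriple k V₀ V₁) (hB : Function.Surjective T.B) :
    ∃ e : V₁ ≃ₗ[k] V₀ × ker T.B, (T.map (LinearEquiv.refl k V₀) e).B = fst k V₀ (ker T.B) := by
  obtain ⟨C, hC⟩ := (ker T.B).exists_isCompl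
  let e := equivProdOfSurjectiveOfIsCompl T.B ((ker T.B).projectionOnto C hC)
    (range_eq_top.mpr hB) (Submodule.range_projectionOnto hC)
    (by rwa [Submodule.ker_projectionOnto])
  exact ⟨e, LinearMap.ext fun v => congr_arg Prod.fst (e.apply_symm_apply v)⟩

theorem exists_map_B_eq_inr (T : CuspTriple k V₀ V₁) (hB : Function.Injective T.B) :
    ∃ (K : Submodule k V₀) (e : V₀ ≃ₗ[k] K × V₁),
      (T.map e (LinearEquiv.refl k V₁)).B = inr k K V₁ := by
  obtain ⟨C, hC⟩ := (range T.B).exists_isCompl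
  let e := (C.prodEquivOfIsCompl _ hC.symm).symm.trans
    ((LinearEquiv.refl k C).prodCongr (LinearEquiv.ofInjective T.B hB).symm)
  refine ⟨C, e, LinearMap.ext fun u => ?_⟩
  change e (T.B u) = (0, u)
  have h₁ := C.prodEquivOfIsCompl_symm_apply_right _ hC.symm ⟨T.B u, mem_range_self T.B u⟩
  have h₂ : (LinearEquiv.ofInjective T.B hB).symm ⟨T.B u, mem_range_self T.B u⟩ = u :=
    (LinearEquiv.symm_apply_eq _).mpr rfl
  simp [e, h₁, h₂]

end General

section Reduction

variable {k V₀ V₁ V₀' V₁' K K' : Type*} [Field k]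
  [AddCommGroup V₀] [Module k V₀] [AddCommGroup V₁] [Module k V₁]
  [AddCommGroup V₀'] [Module k V₀'] [AddCommGroup V₁'] [Module k V₁']
  [AddCommGroup K] [Module k K] [AddCommGroup K'] [Module k K']

def lowerTriangular (X : V₀ →ₗ[k] V₀') (W : K →ₗ[k] K') (Z : V₀ →ₗ[k] K') :
    V₀ × K →ₗ[k] V₀' × K' :=
  (X ∘ₗ fst k V₀ K).prod (W ∘ₗ snd k V₀ K + Z ∘ₗ fst k V₀ K)

@[simp]
theorem lowerTriangular_apply (X : V₀ →ₗ[k] V₀') (W : K →ₗ[k] K') (Z : V₀ →ₗ[k] K')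
    (v : V₀ × K) : lowerTriangular X W Z v = (X v.1, W v.2 + Z v.1) := rfl

theorem lowerTriangular_eq_skewProd (X : V₀ ≃ₗ[k] V₀') (W : K ≃ₗ[k] K') (Z : V₀ →ₗ[k] K') :
    lowerTriangular (X : V₀ →ₗ[k] V₀') W Z = (X.skewProd W Z : V₀ × K →ₗ[k] V₀' × K') := rfl

/-- When `B = fst`, the morphism conditions force `W = [[X, 0], [W₁₀, W₁₁]]`, and what remains
of them says that `(X, W₁₁, W₁₀)` is a morphism of this smaller problem on `V₀ × K`. -/
def reduceFst (T : CuspTriple k V₀ (V₀ × K)) : CuspTriple k V₀ K :=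
  ⟨T.A + fst k V₀ K ∘ₗ T.D ∘ₗ inl k V₀ K, fst k V₀ K ∘ₗ T.D ∘ₗ inr k V₀ K,
    snd k V₀ K ∘ₗ T.D ∘ₗ inr k V₀ K⟩

theorem reduceFst_shift (T : CuspTriple k V₀ (V₀ × K)) (l₀ l₁ : k) :
    (T.shift l₀ l₁).reduceFst = T.reduceFst.shift (l₀ + l₁) l₁ := by
  simp only [reduceFst, shift, CuspTriple.mk.injEq]
  refine ⟨?_, ?_, ?_⟩ <;> ext <;> simp [add_smul]; abel

theorem IsHom.liftFst {T : CuspTriple k V₀ (V₀ × K)} {U : CuspTriple k V₀' (V₀' × K')}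
    (hT : T.B = fst k V₀ K) (hU : U.B = fst k V₀' K') {X W Z}
    (h : IsHom T.reduceFst U.reduceFst X W Z) :
    ∃ Z', IsHom T U X (lowerTriangular X W Z) Z' := by
  set W' := lowerTriangular X W Z
  refine ⟨(X ∘ₗ T.A - U.A ∘ₗ X).prod
    (-(snd k V₀' K' ∘ₗ (W' ∘ₗ T.D - U.D ∘ₗ W') ∘ₗ inl k V₀ K)), ⟨?_, ?_, ?_⟩⟩
  · simp [hT, hU, W']
  · simp [hU]
  · rintro ⟨x, y⟩
    have r₁ := h.comm_B y
    have r₂ := h.comm_A x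
    have r₃ := h.comm_D y
    simp only [reduceFst, LinearMap.add_apply, comp_apply, inl_apply, inr_apply, fst_apply,
      snd_apply, map_add] at r₁ r₂ r₃
    have hUD : U.D (X x, W y + Z x) = U.D (X x, 0) + U.D (0, W y) + U.D (0, Z x) := by
      rw [← map_add, ← map_add]; simp
    simp only [hT, W', Prod.ext_iff, apply_mk_eq_add T.D x y, hUD, apply_mk_eq_add U.D (X x) (Z x),
      map_add, lowerTriangular_apply, LinearMap.prod_apply, Function.prod_apply,
      LinearMap.sub_apply, comp_apply, inl_apply, fst_apply, snd_apply, LinearMap.neg_apply,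
      Prod.fst_add, Prod.snd_add, Prod.fst_sub, Prod.snd_sub, Prod.fst_zero, Prod.snd_zero,
      map_zero, zero_add]
    constructor
    · linear_combination (norm := module) r₁ + r₂
    · linear_combination (norm := module) r₃

theorem IsBrick.reduceFst {T : CuspTriple k V₀ (V₀ × K)} (hT : T.B = fst k V₀ K)
    (h : T.IsBrick) : T.reduceFst.IsBrick := by
  intro X W Z hXWZ
  obtain ⟨Z', hlift⟩ := hXWZ.liftFst hT hT
  obtain ⟨c, hX, hW, -⟩ := h _ _ _ hlift
  refine ⟨c, hX, ?_, ?_⟩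
  · ext y
    simpa using congr(($(LinearMap.congr_fun hW (0, y))).2)
  · ext x
    simpa [hX] using congr(($(LinearMap.congr_fun hW (x, 0))).2)

theorem IsIso.of_reduceFst {T : CuspTriple k V₀ (V₀ × K)} (hT : T.B = fst k V₀ K) {l₀ l₁ : k}
    (h : IsIso (T.reduceFst.shift (l₀ + l₁) l₁) T.reduceFst) : IsIso (T.shift l₀ l₁) T := by
  obtain ⟨X, W, Z, h⟩ := h
  rw [← reduceFst_shift] at h
  obtain ⟨Z', hlift⟩ := h.liftFst (T := T.shift l₀ l₁) hT hT
  exact ⟨X, X.skewProd W Z, Z', lowerTriangular_eq_skewProd X W Z ▸ hlift⟩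

/-- When `B = inr`, the morphism conditions force `X = [[X₀₀, 0], [X₁₀, W]]`, and what remains
of them says that `(X₀₀, W, X₁₀)` is a morphism of this smaller problem on `K × V₁`. -/
def reduceInr (T : CuspTriple k (K × V₁) V₁) : CuspTriple k K V₁ :=
  ⟨fst k K V₁ ∘ₗ T.A ∘ₗ inl k K V₁, fst k K V₁ ∘ₗ T.A ∘ₗ inr k K V₁,
    T.D + snd k K V₁ ∘ₗ T.A ∘ₗ inr k K V₁⟩

theorem reduceInr_shift (T : CuspTriple k (K × V₁) V₁) (l₀ l₁ : k) :
    (T.shift l₀ l₁).reduceInr = T.reduceInr.shift l₀ (l₀ + l₁) := by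
  simp only [reduceInr, shift, CuspTriple.mk.injEq]
  refine ⟨?_, ?_, ?_⟩ <;> ext <;> simp [add_smul]; abel

theorem IsHom.liftInr {T : CuspTriple k (K × V₁) V₁} {U : CuspTriple k (K' × V₁') V₁'}
    (hT : T.B = inr k K V₁) (hU : U.B = inr k K' V₁') {X W Z}
    (h : IsHom T.reduceInr U.reduceInr X W Z) :
    ∃ Z', IsHom T U (lowerTriangular X W Z) W Z' := by
  set X' := lowerTriangular X W Z
  refine ⟨snd k K' V₁' ∘ₗ (X' ∘ₗ T.A - U.A ∘ₗ X'), ⟨?_, ?_, ?_⟩⟩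
  · simp [hT, hU, X']
  · rintro ⟨y, u⟩
    have r₁ := h.comm_B u
    have r₂ := h.comm_A y
    simp only [reduceInr, comp_apply, inl_apply, inr_apply, fst_apply] at r₁ r₂
    have hUA : U.A (X y, W u + Z y) = U.A (X y, 0) + U.A (0, W u) + U.A (0, Z y) := by
      rw [← map_add, ← map_add]; simp
    simp only [hU, X', Prod.ext_iff, apply_mk_eq_add T.A y u, hUA, map_add,
      lowerTriangular_apply, LinearMap.sub_apply, comp_apply, inr_apply, snd_apply,
      Prod.fst_add, Prod.snd_add, Prod.fst_sub, Prod.snd_sub, and_true]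
    linear_combination (norm := module) r₁ + r₂
  · intro u
    have r₃ := h.comm_D u
    simp only [reduceInr, LinearMap.add_apply, comp_apply, inr_apply, fst_apply,
      snd_apply, map_add] at r₃
    simp only [hT, X', lowerTriangular_apply, LinearMap.sub_apply, comp_apply, inr_apply,
      snd_apply, Prod.snd_sub, map_zero, add_zero]
    linear_combination (norm := module) r₃

theorem IsBrick.reduceInr {T : CuspTriple k (K × V₁) V₁} (hT : T.B = inr k K V₁)
    (h : T.IsBrick) : T.reduceInr.IsBrick := by
  intro X W Z hXWZ
  obtain ⟨Z', hlift⟩ := hXWZ.liftInr hT hT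
  obtain ⟨c, hX, hW, -⟩ := h _ _ _ hlift
  refine ⟨c, ?_, hW, ?_⟩
  · ext y
    simpa using congr(($(LinearMap.congr_fun hX (y, 0))).1)
  · ext y
    simpa using congr(($(LinearMap.congr_fun hX (y, 0))).2)

theorem IsIso.of_reduceInr {T : CuspTriple k (K × V₁) V₁} (hT : T.B = inr k K V₁) {l₀ l₁ : k}
    (h : IsIso (T.reduceInr.shift l₀ (l₀ + l₁)) T.reduceInr) : IsIso (T.shift l₀ l₁) T := by
  obtain ⟨X, W, Z, h⟩ := h
  rw [← reduceInr_shift] at h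
  obtain ⟨Z', hlift⟩ := h.liftInr (T := T.shift l₀ l₁) hT hT
  exact ⟨X.skewProd W Z, W, Z', lowerTriangular_eq_skewProd X W Z ▸ hlift⟩

end Reduction

universe u

theorem IsBrick.isIso_shift {k : Type*} [Field k] {V₀ V₁ : Type u} [AddCommGroup V₀]
    [Module k V₀] [AddCommGroup V₁] [Module k V₁] [FiniteDimensional k V₀]
    [FiniteDimensional k V₁] {T : CuspTriple k V₀ V₁} (hT : T.IsBrick) {l₀ l₁ : k}
    (hl : finrank k V₀ • l₀ + finrank k V₁ • l₁ = 0) : IsIso (T.shift l₀ l₁) T := by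
  induction hn : finrank k V₀ + finrank k V₁ using Nat.strong_induction_on
    generalizing V₀ V₁ l₀ l₁ with
  | _ n ih =>
  rcases subsingleton_or_nontrivial V₁ with h₁ | h₁
  · rw [finrank_zero_of_subsingleton (M := V₁), zero_nsmul, add_zero] at hl
    exact T.isIso_shift_self
      (smul_eq_zero_of_finrank_le_one hT.finrank_le_one_of_subsingleton_right hl)
      fun _ => Subsingleton.elim _ _
  rcases subsingleton_or_nontrivial V₀ with h₀ | h₀
  · rw [finrank_zero_of_subsingleton (M := V₀), zero_nsmul, zero_add] at hl
    exact T.isIso_shift_self (fun _ => Subsingleton.elim _ _)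
      (smul_eq_zero_of_finrank_le_one hT.finrank_le_one_of_subsingleton_left hl)
  rcases hT.surjective_or_injective with hB | hB
  · obtain ⟨e, he⟩ := T.exists_map_B_eq_fst hB
    have hdim : finrank k V₁ = finrank k V₀ + finrank k (ker T.B) := by
      rw [e.finrank_eq, finrank_prod]
    have hpos : 0 < finrank k V₀ := finrank_pos
    refine IsIso.of_map_shift (IsIso.of_reduceFst he
      (ih _ (by omega) ((hT.map _ e).reduceFst he) ?_ rfl))
    rw [hdim] at hl
    simp only [nsmul_eq_mul] at hl ⊢
    push_cast at hl
    linear_combination hl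
  · obtain ⟨K, e, he⟩ := T.exists_map_B_eq_inr hB
    have hdim : finrank k V₀ = finrank k K + finrank k V₁ := by
      rw [e.finrank_eq, finrank_prod]
    have hpos : 0 < finrank k V₁ := finrank_pos
    refine IsIso.of_map_shift (IsIso.of_reduceInr he
      (ih _ (by omega) ((hT.map e _).reduceInr he) ?_ rfl))
    rw [hdim] at hl
    simp only [nsmul_eq_mul] at hl ⊢
    push_cast at hl
    linear_combination hl

end CuspTriple

section Blocks

variable {m n α : Type*}

theorem Matrix.toBlock_eq_zero_iff [Zero α] (M : Matrix m n α) (p : m → Prop) (q : n → Prop) :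
    M.toBlock p q = 0 ↔ ∀ i j, p i → q j → M i j = 0 :=
  ⟨fun h i j hi hj => congr_fun₂ h ⟨i, hi⟩ ⟨j, hj⟩, fun h => Matrix.ext fun i j => h i j i.2 j.2⟩

theorem Matrix.toBlock_add [Add α] (M N : Matrix m n α) (p : m → Prop) (q : n → Prop) :
    (M + N).toBlock p q = M.toBlock p q + N.toBlock p q := rfl

theorem Matrix.toBlock_sub [Sub α] (M N : Matrix m n α) (p : m → Prop) (q : n → Prop) :
    (M - N).toBlock p q = M.toBlock p q - N.toBlock p q := rfl

theorem Matrix.toBlock_smul {R : Type*} [SMul R α] (c : R) (M : Matrix m n α) (p : m → Prop)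
    (q : n → Prop) : (c • M).toBlock p q = c • M.toBlock p q := rfl

theorem Matrix.toBlock_one_self_compl [DecidableEq m] [Zero α] [One α] (p : m → Prop) :
    (1 : Matrix m m α).toBlock p (fun i => ¬p i) = 0 :=
  Matrix.ext fun i j => Matrix.one_apply_ne fun h => j.2 (h ▸ i.2)

theorem Matrix.toBlock_one_compl_self [DecidableEq m] [Zero α] [One α] (p : m → Prop) :
    (1 : Matrix m m α).toBlock (fun i => ¬p i) p = 0 :=
  Matrix.ext fun i j => Matrix.one_apply_ne fun h => i.2 (h ▸ j.2)

end Blocks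

theorem fin_two_lt_iff (a b : Fin 2) : a < b ↔ a = 0 ∧ ¬b = 0 := by
  revert a b; decide

theorem fin_two_le_iff (a b : Fin 2) :
    a ≤ b ↔ a = 0 ∧ b = 0 ∨ a = 0 ∧ ¬b = 0 ∨ ¬a = 0 ∧ ¬b = 0 := by
  revert a b; decide

section CuspMatrix

open Matrix CuspTriple

variable {k : Type*} [Field k] {r : ℕ} (β : Fin r → Fin 2)

theorem CuspHom.add_smul_one_iff {M M' S : Matrix (Fin r) (Fin r) k} (c : k) :
    CuspHom β (M + c • 1) (M' + c • 1) S ↔ CuspHom β M M' S := by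
  have h : S * (M + c • 1) - (M' + c • 1) * S = S * M - M' * S := by
    simp only [Matrix.mul_add, Matrix.add_mul, Matrix.mul_smul, Matrix.smul_mul, Matrix.mul_one,
      Matrix.one_mul]
    abel
  rw [CuspHom, CuspHom, h]

theorem CuspBrick.add_smul_one {M : Matrix (Fin r) (Fin r) k} (hM : CuspBrick β M) (c : k) :
    CuspBrick β (M + c • 1) := by
  refine ⟨fun i j h => ?_, fun S hS => hM.2 S ((CuspHom.add_smul_one_iff β c).mp hS)⟩
  have hij : i ≠ j := by rintro rfl; exact h le_rfl
  simp [hM.1 i j h, Matrix.one_apply_ne hij]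

/-- `S M - M' S` vanishes on and above the block diagonal and `T` is block lower triangular,
so `(S M - M' S) T` has zero diagonal. -/
theorem CuspEquiv.trace_eq {M M' : Matrix (Fin r) (Fin r) k} (h : CuspEquiv β M M') :
    M.trace = M'.trace := by
  obtain ⟨S, T, hS, hT, hST, hTS⟩ := h
  have hzero : ((S * M - M' * S) * T).trace = 0 := by
    refine Finset.sum_eq_zero fun i _ => ?_
    rw [Matrix.diag_apply, Matrix.mul_apply]
    refine Finset.sum_eq_zero fun a _ => ?_
    rcases le_or_gt (β i) (β a) with hle | hlt
    · rw [hS.2 i a hle, zero_mul]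
    · rw [hT.1 a i hlt, mul_zero]
  rwa [Matrix.sub_mul, Matrix.trace_sub, Matrix.mul_assoc M', hST, Matrix.mul_one,
    Matrix.trace_mul_cycle, hTS, Matrix.one_mul, sub_eq_zero] at hzero

theorem mul_mul_apply_eq_zero_of_le {L C R : Matrix (Fin r) (Fin r) k}
    (hL : ∀ i j, β i < β j → L i j = 0) (hC : ∀ i j, β i ≤ β j → C i j = 0)
    (hR : ∀ i j, β i < β j → R i j = 0) {i j : Fin r} (hij : β i ≤ β j) : (L * C * R) i j = 0 := by
  simp only [Matrix.mul_apply, Finset.sum_mul]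
  refine Finset.sum_eq_zero fun b _ => Finset.sum_eq_zero fun a _ => ?_
  by_cases hbj : β b < β j
  · rw [hR b j hbj, mul_zero]
  by_cases hia : β i < β a
  · rw [hL i a hia, zero_mul, zero_mul]
  rw [hC a b (by order), mul_zero, zero_mul]

theorem CuspHom.nonsing_inv {M M' S : Matrix (Fin r) (Fin r) k} (hS : CuspHom β M M' S)
    (hdet : IsUnit S.det) : CuspHom β M' M S⁻¹ := by
  have hlower : ∀ i j, β i < β j → S⁻¹ i j = 0 := by
    have := S.invertibleOfIsUnitDet hdet
    have hS' : S.BlockTriangular (OrderDual.toDual ∘ β) := fun i j h =>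
      hS.1 i j (OrderDual.toDual_lt_toDual.mp h)
    exact fun i j h => blockTriangular_inv_of_blockTriangular hS' (OrderDual.toDual_lt_toDual.mpr h)
  refine ⟨hlower, fun i j hij => ?_⟩
  have h : S⁻¹ * M' - M * S⁻¹ = -(S⁻¹ * (S * M - M' * S) * S⁻¹) := by
    simp only [Matrix.mul_sub, Matrix.sub_mul, ← Matrix.mul_assoc, Matrix.nonsing_inv_mul _ hdet,
      Matrix.one_mul]
    simp only [Matrix.mul_assoc, Matrix.mul_nonsing_inv _ hdet, Matrix.mul_one]
    abel
  rw [h, Matrix.neg_apply, mul_mul_apply_eq_zero_of_le β hlower hS.2 hlower hij, neg_zero]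

theorem cuspEquiv_of_isUnit_det {M M' S : Matrix (Fin r) (Fin r) k} (hS : CuspHom β M M' S)
    (hdet : IsUnit S.det) : CuspEquiv β M M' :=
  ⟨S, S⁻¹, hS, hS.nonsing_inv β hdet, S.mul_nonsing_inv hdet, S.nonsing_inv_mul hdet⟩

theorem CuspTriple.isHom_toLin'_iff {m n m' n' : Type*} [Fintype m] [DecidableEq m] [Fintype n]
    [DecidableEq n] [Fintype m'] [DecidableEq m'] [Fintype n'] [DecidableEq n']
    {A : Matrix m m k} {B : Matrix m n k} {D : Matrix n n k} {A' : Matrix m' m' k}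
    {B' : Matrix m' n' k} {D' : Matrix n' n' k} {X : Matrix m' m k} {W : Matrix n' n k}
    {Z : Matrix n' m k} :
    IsHom ⟨toLin' A, toLin' B, toLin' D⟩ ⟨toLin' A', toLin' B', toLin' D'⟩ (toLin' X) (toLin' W)
      (toLin' Z) ↔ X * B = B' * W ∧ X * A - A' * X = B' * Z ∧ Z * B + W * D - D' * W = 0 := by
  simp only [← toLin'.injective.eq_iff, LinearMap.ext_iff, map_sub, map_add, map_zero,
    LinearMap.sub_apply, LinearMap.add_apply, LinearMap.zero_apply, toLin'_mul_apply]
  exact ⟨fun ⟨h₁, h₂, h₃⟩ => ⟨h₁, h₂, h₃⟩, fun ⟨h₁, h₂, h₃⟩ => ⟨h₁, h₂, h₃⟩⟩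

def cuspTriple (M : Matrix (Fin r) (Fin r) k) :
    CuspTriple k ({i // β i = 0} → k) ({i // ¬β i = 0} → k) :=
  ⟨toLin' (M.toBlock (β · = 0) (β · = 0)), toLin' (M.toBlock (β · = 0) (¬β · = 0)),
    toLin' (M.toBlock (¬β · = 0) (¬β · = 0))⟩

theorem cuspTriple_add_smul_one (M : Matrix (Fin r) (Fin r) k) (c : k) :
    cuspTriple β (M + c • 1) = (cuspTriple β M).shift c c := by
  simp only [cuspTriple, shift, toBlock_add, toBlock_smul, toBlock_one_self,
    toBlock_one_self_compl, smul_zero, add_zero, map_add, map_smul, toLin'_one]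

theorem cuspHom_iff {M M' S : Matrix (Fin r) (Fin r) k} :
    CuspHom β M M' S ↔ S.toBlock (β · = 0) (¬β · = 0) = 0 ∧
      (cuspTriple β M).IsHom (cuspTriple β M') (toLin' (S.toBlock (β · = 0) (β · = 0)))
        (toLin' (S.toBlock (¬β · = 0) (¬β · = 0))) (toLin' (S.toBlock (¬β · = 0) (β · = 0))) := by
  have hlt : (∀ i j, β i < β j → S i j = 0) ↔ S.toBlock (β · = 0) (¬β · = 0) = 0 := by
    simp only [toBlock_eq_zero_iff, fin_two_lt_iff, and_imp]
  have hle (C : Matrix (Fin r) (Fin r) k) : (∀ i j, β i ≤ β j → C i j = 0) ↔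
      C.toBlock (β · = 0) (β · = 0) = 0 ∧ C.toBlock (β · = 0) (¬β · = 0) = 0 ∧
        C.toBlock (¬β · = 0) (¬β · = 0) = 0 := by
    simp only [toBlock_eq_zero_iff, fin_two_le_iff, or_imp, and_imp, forall_and]
  rw [CuspHom, hlt, hle]
  unfold cuspTriple
  rw [isHom_toLin'_iff]
  refine and_congr_right fun h₀₁ => ?_
  simp only [toBlock_sub, toBlock_mul_eq_add _ (β · = 0), h₀₁, Matrix.zero_mul, Matrix.mul_zero,
    add_zero, zero_add, sub_add_eq_sub_sub, sub_eq_zero]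
  exact and_left_comm

def ofLowerBlocks (X : Matrix {i // β i = 0} {i // β i = 0} k)
    (W : Matrix {i // ¬β i = 0} {i // ¬β i = 0} k) (Z : Matrix {i // ¬β i = 0} {i // β i = 0} k) :
    Matrix (Fin r) (Fin r) k :=
  reindex (Equiv.sumCompl (β · = 0)) (Equiv.sumCompl (β · = 0)) (fromBlocks X 0 Z W)

section LowerBlocks

variable {β} {X : Matrix {i // β i = 0} {i // β i = 0} k}
  {W : Matrix {i // ¬β i = 0} {i // ¬β i = 0} k} {Z : Matrix {i // ¬β i = 0} {i // β i = 0} k}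

@[simp]
theorem toBlock_ofLowerBlocks_zero_zero :
    (ofLowerBlocks β X W Z).toBlock (β · = 0) (β · = 0) = X := by
  ext i j
  simp [ofLowerBlocks]

@[simp]
theorem toBlock_ofLowerBlocks_zero_ne :
    (ofLowerBlocks β X W Z).toBlock (β · = 0) (¬β · = 0) = 0 := by
  ext i j
  simp [ofLowerBlocks]

@[simp]
theorem toBlock_ofLowerBlocks_ne_zero :
    (ofLowerBlocks β X W Z).toBlock (¬β · = 0) (β · = 0) = Z := by
  ext i j
  simp [ofLowerBlocks]

@[simp]
theorem toBlock_ofLowerBlocks_ne_ne :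
    (ofLowerBlocks β X W Z).toBlock (¬β · = 0) (¬β · = 0) = W := by
  ext i j
  simp [ofLowerBlocks]

theorem det_ofLowerBlocks : (ofLowerBlocks β X W Z).det = X.det * W.det := by
  rw [ofLowerBlocks, det_reindex_self, det_fromBlocks_zero₁₂]

end LowerBlocks

theorem cuspHom_ofLowerBlocks_iff {M M' : Matrix (Fin r) (Fin r) k}
    {X : ({i // β i = 0} → k) →ₗ[k] {i // β i = 0} → k}
    {W : ({i // ¬β i = 0} → k) →ₗ[k] {i // ¬β i = 0} → k}
    {Z : ({i // β i = 0} → k) →ₗ[k] {i // ¬β i = 0} → k} :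
    CuspHom β M M' (ofLowerBlocks β (toMatrix' X) (toMatrix' W) (toMatrix' Z)) ↔
      (cuspTriple β M).IsHom (cuspTriple β M') X W Z := by
  simp [cuspHom_iff]

theorem CuspBrick.isBrick_cuspTriple {M : Matrix (Fin r) (Fin r) k} (hM : CuspBrick β M) :
    (cuspTriple β M).IsBrick := by
  intro X W Z h
  obtain ⟨c, hc⟩ := hM.2 _ ((cuspHom_ofLowerBlocks_iff β).mpr h)
  have hX := congr_arg (toLin' ∘ (toBlock · (β · = 0) (β · = 0))) hc
  have hW := congr_arg (toLin' ∘ (toBlock · (¬β · = 0) (¬β · = 0))) hc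
  have hZ := congr_arg (toLin' ∘ (toBlock · (¬β · = 0) (β · = 0))) hc
  simp only [Function.comp_apply, toBlock_ofLowerBlocks_zero_zero, toBlock_ofLowerBlocks_ne_ne,
    toBlock_ofLowerBlocks_ne_zero, toLin'_toMatrix', toBlock_smul, toBlock_one_self,
    toBlock_one_compl_self, smul_zero, map_smul, map_zero, toLin'_one] at hX hW hZ
  exact ⟨c, hX, hW, hZ⟩

theorem CuspBrick.cuspEquiv_add_smul_one {M : Matrix (Fin r) (Fin r) k} (hM : CuspBrick β M)
    {c : k} (hc : (r : k) * c = 0) : CuspEquiv β (M + c • 1) M := by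
  have hl : finrank k ({i // β i = 0} → k) • c + finrank k ({i // ¬β i = 0} → k) • c = 0 := by
    rw [← add_nsmul, finrank_fintype_fun_eq_card, finrank_fintype_fun_eq_card, ← Fintype.card_sum,
      Fintype.card_congr (Equiv.sumCompl _), Fintype.card_fin, nsmul_eq_mul, hc]
  obtain ⟨X, W, Z, h⟩ := (hM.isBrick_cuspTriple β).isIso_shift hl
  rw [← cuspTriple_add_smul_one] at h
  refine cuspEquiv_of_isUnit_det β ((cuspHom_ofLowerBlocks_iff β).mpr h) ?_
  rw [det_ofLowerBlocks, LinearMap.det_toMatrix', LinearMap.det_toMatrix']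
  exact X.isUnit_det'.mul W.isUnit_det'

theorem CuspBrick.cuspEquiv_add_smul_one_iff {M : Matrix (Fin r) (Fin r) k}
    (hM : CuspBrick β M) (c : k) : CuspEquiv β (M + c • 1) M ↔ (r : k) * c = 0 := by
  refine ⟨fun h => ?_, hM.cuspEquiv_add_smul_one β⟩
  have := h.trace_eq β
  rwa [trace_add, trace_smul, Matrix.trace_one, Fintype.card_fin, smul_eq_mul, add_eq_left,
    mul_comm] at this

end CuspMatrix

theorem cuspidal_brick_translation_general (k : Type*) [Field k]
    (r : ℕ) (hr : 1 ≤ r) (β : Fin r → Fin 2)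
    (M : Matrix (Fin r) (Fin r) k) (hM : CuspBrick β M) (c : k) :
    CuspBrick β (M + c • (1 : Matrix (Fin r) (Fin r) k)) ∧
    (CuspEquiv β (M + c • (1 : Matrix (Fin r) (Fin r) k)) M ↔ (r : k) * c = 0) ∧
    (CharZero k → (CuspEquiv β (M + c • (1 : Matrix (Fin r) (Fin r) k)) M → c = 0)) := by
  refine ⟨hM.add_smul_one β c, hM.cuspEquiv_add_smul_one_iff β c, fun _ h => ?_⟩
  have hr' : (r : k) ≠ 0 := Nat.cast_ne_zero.mpr (by omega)
  exact (mul_eq_zero.mp ((hM.cuspEquiv_add_smul_one_iff β c).mp h)).resolve_left hr'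

/-- Adding `c·I` to a cuspidal brick gives again a brick, equivalent to the original
one iff `r·c = 0` in `k`; in particular in characteristic zero only for `c = 0`
(the Pic⁰(E) ≅ k action on simple bundles of the cuspidal cubic, with trivial
stabilizer). -/
theorem cuspidal_brick_translation (k : Type*) [Field k] [IsAlgClosed k]
    (r : ℕ) (hr : 1 ≤ r) (β : Fin r → Fin 2)
    (M : Matrix (Fin r) (Fin r) k) (hM : CuspBrick β M) (c : k) :
    CuspBrick β (M + c • (1 : Matrix (Fin r) (Fin r) k)) ∧
    (CuspEquiv β (M + c • (1 : Matrix (Fin r) (Fin r) k)) M ↔ (r : k) * c = 0) ∧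
    (CharZero k → (CuspEquiv β (M + c • (1 : Matrix (Fin r) (Fin r) k)) M → c = 0)) :=
  cuspidal_brick_translation_general k r hr β M hM c
end
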